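/- arXiv:2408.16765 — 5 statements merged into one kernel-verified Lean document; each statement's English description precedes it below -/
import Mathlib

section
/- Suppose X₀ has a smooth density ρ₀ with sup_x ‖∇² log ρ₀(x)‖ < ∞ (operator norm). Then for every x₀ ∈ ℝ^d, lim_{t→0⁺} E[log ρ_t(X_t) | X₀ = x₀] = log ρ₀(x₀). -/
open MeasureTheory Real Filter
open scoped ENNReal

noncomputable section

/-- Density at `x` of the Gaussian distribution `N(√(1-t)·x₀, t·I_d)`, i.e. the transition
density of `X_t = √(1-t)·X₀ + √t·Z` given `X₀ = x₀`. -/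
def heatKernel (d : ℕ) (t : ℝ) (x x₀ : EuclideanSpace ℝ (Fin d)) : ℝ :=
  (2 * π * t) ^ (-(d : ℝ) / 2) * Real.exp (-‖x - Real.sqrt (1 - t) • x₀‖ ^ 2 / (2 * t))

/-- The density `ρ_t` of `X_t = √(1-t)·X₀ + √t·Z` where `X₀ ∼ μ` and `Z ∼ N(0, I_d)`
is independent of `X₀`. -/
def rho (d : ℕ) (μ : Measure (EuclideanSpace ℝ (Fin d))) (t : ℝ)
    (x : EuclideanSpace ℝ (Fin d)) : ℝ :=
  ∫ x₀, heatKernel d t x x₀ ∂μ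

/-- Density of the standard Gaussian `N(0, I_d)` on `ℝ^d`. -/
def stdGaussianDensity (d : ℕ) (z : EuclideanSpace ℝ (Fin d)) : ℝ :=
  (2 * π) ^ (-(d : ℝ) / 2) * Real.exp (-‖z‖ ^ 2 / 2)

/-- Conditional expectation `E[f(X_t) | X₀ = x₀] = E_{Z ∼ N(0,I_d)}[f(√(1-t)·x₀ + √t·Z)]`. -/
def condExpX0 (d : ℕ) (t : ℝ) (x₀ : EuclideanSpace ℝ (Fin d))
    (f : EuclideanSpace ℝ (Fin d) → ℝ) : ℝ :=
  ∫ z, f (Real.sqrt (1 - t) • x₀ + Real.sqrt t • z) * stdGaussianDensity d z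

open scoped RealInnerProductSpace NNReal

section AuxLemmas
variable {d : ℕ}
local notation "E" => EuclideanSpace ℝ (Fin d)

lemma key_cast (b : ℝ) (w v : E) :
    (-(b:ℂ) * (‖v‖:ℂ)^2 + 1 * ((⟪w, v⟫ : ℝ) : ℂ)) = ((-b * ‖v‖^2 + ⟪w, v⟫ : ℝ) : ℂ) := by
  push_cast; ring

lemma integrable_rexp_quad (b : ℝ) (hb : 0 < b) (w : E) :
    Integrable (fun v : E => rexp (-b * ‖v‖^2 + ⟪w, v⟫)) := by
  have h := (GaussianFourier.integrable_cexp_neg_mul_sq_norm_add (V := E)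
    (b := (b:ℂ)) (by simpa using hb) 1 w).re
  refine h.congr (Eventually.of_forall fun v => ?_)
  show (Complex.exp _).re = _
  rw [key_cast, Complex.exp_ofReal_re]

lemma integral_rexp_quad (b : ℝ) (hb : 0 < b) (w : E) :
    ∫ v : E, rexp (-b * ‖v‖^2 + ⟪w, v⟫)
      = (π / b) ^ ((d:ℝ) / 2) * rexp (‖w‖^2 / (4 * b)) := by
  have h := GaussianFourier.integral_cexp_neg_mul_sq_norm_add (V := E)
    (b := (b:ℂ)) (by simpa using hb) 1 w
  rw [finrank_euclideanSpace_fin] at h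
  rw [← Complex.ofReal_inj]
  rw [show ((∫ v : E, rexp (-b * ‖v‖^2 + ⟪w, v⟫) : ℝ) : ℂ)
      = ∫ v : E, Complex.exp (-(b:ℂ) * ‖v‖^2 + 1 * ((⟪w, v⟫ : ℝ) : ℂ)) from ?_, h]
  · rw [Complex.ofReal_mul, Complex.ofReal_cpow (by positivity), Complex.ofReal_exp]
    push_cast
    ring_nf
  · rw [show (fun v : E => Complex.exp (-(b:ℂ) * (‖v‖:ℂ)^2 + 1 * ((⟪w, v⟫ : ℝ) : ℂ)))
        = fun v : E => ((rexp (-b * ‖v‖^2 + ⟪w, v⟫) : ℝ) : ℂ) from ?_]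
    · exact (integral_ofReal).symm
    · funext v
      rw [key_cast, Complex.ofReal_exp]

section Taylor
variable (f : EuclideanSpace ℝ (Fin d) → ℝ) (L : ℝ)
  (hf : ContDiff ℝ (⊤ : ℕ∞) f)
  (hL : ∀ x : EuclideanSpace ℝ (Fin d), ‖fderiv ℝ (gradient f) x‖ ≤ L)

include hf hL

lemma grad_lip : ∀ v x : E, ‖gradient f v - gradient f x‖ ≤ L * ‖v - x‖ := by
  intro v x
  have hgd : Differentiable ℝ (gradient f) := by
    have h1 : ContDiff ℝ (⊤ : ℕ∞) (fderiv ℝ f) := hf.fderiv_right (by simp)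
    have h2 : ContDiff ℝ (⊤ : ℕ∞) (gradient f) :=
      ((InnerProductSpace.toDual ℝ (EuclideanSpace ℝ (Fin d))).symm.contDiff).comp h1
    exact h2.differentiable (by simp)
  exact convex_univ.norm_image_sub_le_of_norm_fderiv_le (fun x _ => hgd x)
    (fun x _ => hL x) (Set.mem_univ _) (Set.mem_univ _)

lemma taylor_bound : ∀ x u : E, |f (x + u) - f x - ⟪gradient f x, u⟫| ≤ L * ‖u‖ ^ 2 := by
  intro x u
  have hfd : Differentiable ℝ f := hf.differentiable (by simp)
  set A := fderiv ℝ f x with hA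
  have key : ∀ v : E, fderiv ℝ f v - A = (InnerProductSpace.toDual ℝ
      (EuclideanSpace ℝ (Fin d))) (gradient f v - gradient f x) := by
    intro v
    simp only [gradient, map_sub, LinearIsometryEquiv.apply_symm_apply, hA]
  have hb : ∀ v ∈ Metric.closedBall x ‖u‖,
      ‖fderiv ℝ (fun w => f w - A w) v‖ ≤ L * ‖u‖ := by
    intro v hv
    rw [fderiv_fun_sub (hfd v) (A.differentiable v),
      ContinuousLinearMap.fderiv, key v, LinearIsometryEquiv.norm_map]
    calc ‖gradient f v - gradient f x‖ ≤ L * ‖v - x‖ := grad_lip f L hf hL v x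
    _ ≤ L * ‖u‖ := by
        have hL0 : 0 ≤ L := le_trans (norm_nonneg _) (hL x)
        have := Metric.mem_closedBall.mp hv
        rw [dist_eq_norm] at this
        nlinarith [norm_nonneg (v - x)]
  have := (convex_closedBall x ‖u‖).norm_image_sub_le_of_norm_fderiv_le
    (f := fun w => f w - A w) (y := x + u)
    (fun v _ => (hfd v).sub (A.differentiable v))
    hb (Metric.mem_closedBall_self (norm_nonneg u))
    (Metric.mem_closedBall.mpr (by simp [dist_eq_norm]))
  have hAu : A u = ⟪gradient f x, u⟫ := by
    have : (InnerProductSpace.toDual ℝ (EuclideanSpace ℝ (Fin d))) (gradient f x) = A := by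
      simp [gradient, hA]
    rw [← this, InnerProductSpace.toDual_apply_apply]
  have harr : f (x + u) - A (x + u) - (f x - A x) = f (x + u) - f x - A u := by
    rw [map_add]; ring
  simp only [harr, add_sub_cancel_left] at this
  calc |f (x + u) - f x - ⟪gradient f x, u⟫| = ‖f (x + u) - f x - A u‖ := by
        rw [hAu]; rfl
  _ ≤ L * ‖u‖ * ‖u‖ := this
  _ = L * ‖u‖ ^ 2 := by ring
end Taylor

lemma integrable_exp4 : Integrable (fun z : E => rexp (-(1/4) * ‖z‖^2)) := by
  have := integrable_rexp_quad (d := d) (1/4) (by norm_num) 0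
  refine this.congr (Eventually.of_forall fun z => ?_)
  simp

lemma continuous_gauss : Continuous (stdGaussianDensity d) := by
  unfold stdGaussianDensity
  fun_prop

lemma integrable_pow_gauss (k : ℕ) (hk : k ≤ 2) :
    Integrable (fun z : E => ‖z‖ ^ k * stdGaussianDensity d z) := by
  have hA : (0:ℝ) < (2 * π) ^ (-(d : ℝ) / 2) := by positivity
  refine (integrable_exp4.const_mul (5 * (2 * π) ^ (-(d : ℝ) / 2))).mono'
    (Continuous.aestronglyMeasurable (by
      exact (continuous_norm.pow k).mul continuous_gauss)) (Eventually.of_forall fun z => ?_)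
  have h1 : ‖z‖ ^ k ≤ 5 * rexp (‖z‖^2 / 4) := by
    have h := Real.add_one_le_exp (‖z‖^2 / 4)
    have hE := Real.exp_pos (‖z‖^2 / 4)
    have hn : 0 ≤ ‖z‖ := norm_nonneg z
    interval_cases k
    · nlinarith
    · nlinarith [sq_nonneg (‖z‖ - 2)]
    · nlinarith
  have h2 : rexp (-‖z‖^2 / 2) = rexp (-(1/4) * ‖z‖^2) * (rexp (‖z‖^2 / 4))⁻¹ := by
    rw [← Real.exp_neg, ← Real.exp_add]; ring_nf
  have hE := Real.exp_pos (‖z‖^2 / 4)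
  have hE4 := Real.exp_pos (-(1/4) * ‖z‖^2)
  rw [Real.norm_eq_abs, stdGaussianDensity, abs_of_nonneg (by positivity), h2]
  calc ‖z‖ ^ k * ((2 * π) ^ (-(d : ℝ) / 2) * (rexp (-(1/4) * ‖z‖^2) * (rexp (‖z‖^2 / 4))⁻¹))
      ≤ (5 * rexp (‖z‖^2 / 4)) * ((2 * π) ^ (-(d : ℝ) / 2) * (rexp (-(1/4) * ‖z‖^2) * (rexp (‖z‖^2 / 4))⁻¹)) := by
        gcongr
  _ = 5 * (2 * π) ^ (-(d : ℝ) / 2) * rexp (-(1/4) * ‖z‖^2) := by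
        field_simp

lemma integrable_gauss : Integrable (fun z : E => stdGaussianDensity d z) := by
  have := integrable_pow_gauss (d := d) 0 (by norm_num)
  simpa using this

lemma gauss_total : ∫ z : E, stdGaussianDensity d z = 1 := by
  unfold stdGaussianDensity
  rw [MeasureTheory.integral_const_mul]
  have : (fun z : E => rexp (-‖z‖ ^ 2 / 2)) = fun z : E => rexp (-(1/2) * ‖z‖^2 + ⟪(0:E), z⟫) := by
    funext z; simp; ring_nf
  rw [this, integral_rexp_quad (1/2) (by norm_num) 0]
  simp only [norm_zero]
  rw [show π / (1/2 : ℝ) = 2 * π by ring]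
  rw [show ((0:ℝ)^2 / (4 * (1/2)) : ℝ) = 0 by norm_num, Real.exp_zero, mul_one,
    ← Real.rpow_add (by positivity), neg_div, neg_add_cancel, Real.rpow_zero]

lemma rho_eq (μ : Measure (EuclideanSpace ℝ (Fin d)))
    (ρ₀ : EuclideanSpace ℝ (Fin d) → ℝ)
    (hdensity : μ = volume.withDensity (fun x => ENNReal.ofReal (ρ₀ x)))
    (hpos : ∀ x, 0 < ρ₀ x) (hcont : Continuous ρ₀)
    (t : ℝ) (ht : 0 < t) (ht1 : t < 1) (y : E) :
    rho d μ t (Real.sqrt (1-t) • y)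
      = ∫ u : E, ρ₀ (y + u) * ((2*π*t)^(-(d:ℝ)/2)
          * rexp (-((1-t)/(2*t)) * ‖u‖^2)) := by
  have hmeas : Measurable (fun x : E => Real.toNNReal (ρ₀ x)) :=
    (continuous_real_toNNReal.comp hcont).measurable
  rw [rho, hdensity]
  rw [show (fun x : E => ENNReal.ofReal (ρ₀ x))
      = (fun x : E => ((Real.toNNReal (ρ₀ x) : ℝ≥0) : ℝ≥0∞)) from rfl]
  rw [integral_withDensity_eq_integral_smul hmeas]
  rw [← integral_add_left_eq_self
    (fun x₀ : E => Real.toNNReal (ρ₀ x₀) • heatKernel d t (Real.sqrt (1-t) • y) x₀) y]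
  congr 1
  funext u
  have h10 : (0:ℝ) < 1 - t := by linarith
  have hs : Real.sqrt (1-t) • y - Real.sqrt (1-t) • (y + u) = -(Real.sqrt (1-t) • u) := by
    rw [smul_add]; abel
  have hnorm : ‖Real.sqrt (1-t) • y - Real.sqrt (1-t) • (y + u)‖^2 = (1-t) * ‖u‖^2 := by
    rw [hs, norm_neg, norm_smul, Real.norm_eq_abs, abs_of_nonneg (Real.sqrt_nonneg _),
      mul_pow, Real.sq_sqrt h10.le]
  rw [NNReal.smul_def, Real.coe_toNNReal _ (hpos _).le, heatKernel, hnorm]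
  rw [show -((1-t) * ‖u‖^2) / (2*t) = -((1-t)/(2*t)) * ‖u‖^2 by ring]
  rfl

section Sandwich

variable (μ : Measure (EuclideanSpace ℝ (Fin d)))
    (ρ₀ : EuclideanSpace ℝ (Fin d) → ℝ) (L : ℝ)
    (hdensity : μ = volume.withDensity (fun x => ENNReal.ofReal (ρ₀ x)))
    (hpos : ∀ x, 0 < ρ₀ x) (hcont : Continuous ρ₀) (hL0 : 0 ≤ L)
    (htay : ∀ x u : EuclideanSpace ℝ (Fin d),
      |Real.log (ρ₀ (x + u)) - Real.log (ρ₀ x)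
        - ⟪gradient (fun y => Real.log (ρ₀ y)) x, u⟫| ≤ L * ‖u‖ ^ 2)

/-- value of the Gaussian integral bounding rho -/
lemma gauss_side (t s : ℝ) (ht : 0 < t) (hc : 0 < 1 - t + 2*t*s) (ρy : ℝ) (w : E) :
    ∫ u : E, ρy * ((2*π*t)^(-(d:ℝ)/2)
        * rexp (-((1-t)/(2*t) + s) * ‖u‖^2 + ⟪w, u⟫))
      = ρy * ((1 - t + 2*t*s) ^ (-(d:ℝ)/2) * rexp ((t/(2*(1 - t + 2*t*s))) * ‖w‖^2)) := by
  set c := 1 - t + 2*t*s with hcdef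
  have hb : (1-t)/(2*t) + s = c/(2*t) := by field_simp; ring
  have hbpos : 0 < (1-t)/(2*t) + s := by rw [hb]; positivity
  rw [MeasureTheory.integral_const_mul, MeasureTheory.integral_const_mul,
    integral_rexp_quad _ hbpos w]
  congr 1
  have h2pt : (0:ℝ) < 2*π*t := by positivity
  have hπb : π / ((1-t)/(2*t) + s) = (2*π*t) / c := by rw [hb]; field_simp
  rw [hπb, ← mul_assoc]
  congr 1
  · rw [show (-(d:ℝ)/2) = -((d:ℝ)/2) by ring]
    rw [Real.div_rpow h2pt.le hc.le, Real.rpow_neg h2pt.le, Real.rpow_neg hc.le]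
    have h1 : (2*π*t) ^ ((d:ℝ)/2) ≠ 0 := by positivity
    have h2 : c ^ ((d:ℝ)/2) ≠ 0 := by
      exact (Real.rpow_pos_of_pos hc _).ne'
    field_simp
  · congr 1
    rw [hb]
    field_simp
    ring

include hdensity hpos hcont hL0 htay in
lemma rho_log_bounds (t : ℝ) (ht : 0 < t) (ht2 : t < 1/2) (htL : 2*t*L < 1/2) (y : E) :
    0 < rho d μ t (Real.sqrt (1-t) • y)
    ∧ Real.log (rho d μ t (Real.sqrt (1-t) • y))
        ≤ Real.log (ρ₀ y) + Real.log ((1 - t - 2*t*L) ^ (-(d:ℝ)/2))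
          + (t/(2*(1 - t - 2*t*L))) * ‖gradient (fun y => Real.log (ρ₀ y)) y‖^2
    ∧ Real.log (ρ₀ y) + Real.log ((1 - t + 2*t*L) ^ (-(d:ℝ)/2))
          + (t/(2*(1 - t + 2*t*L))) * ‖gradient (fun y => Real.log (ρ₀ y)) y‖^2
        ≤ Real.log (rho d μ t (Real.sqrt (1-t) • y)) := by
  set g := gradient (fun y => Real.log (ρ₀ y)) with hg
  set A := (2*π*t)^(-(d:ℝ)/2) with hA
  have hApos : 0 < A := by rw [hA]; positivity
  have ht1 : t < 1 := by linarith
  have hcm : 0 < 1 - t - 2*t*L := by linarith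
  have hcp : 0 < 1 - t + 2*t*L := by nlinarith
  set a := (1-t)/(2*t) with ha
  -- pointwise functions
  set mid := fun u : E => ρ₀ (y + u) * (A * rexp (-a * ‖u‖^2)) with hmid
  set upper := fun u : E => ρ₀ y * (A * rexp (-(a + -L) * ‖u‖^2 + ⟪g y, u⟫)) with hupper
  set lower := fun u : E => ρ₀ y * (A * rexp (-(a + L) * ‖u‖^2 + ⟪g y, u⟫)) with hlower
  have hbm : 0 < a + -L := by
    rw [ha, show (1-t)/(2*t) + -L = (1 - t - 2*t*L)/(2*t) by field_simp; ring]
    exact div_pos hcm (by linarith)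
  have hapos : 0 < a := div_pos (by linarith) (by linarith)
  have hbp : 0 < a + L := by linarith
  have hmle : ∀ u : E, mid u ≤ upper u := by
    intro u
    have h1 : Real.log (ρ₀ (y + u)) ≤ Real.log (ρ₀ y) + ⟪g y, u⟫ + L * ‖u‖^2 := by
      have := (abs_le.mp (htay y u)).2
      linarith
    have e1 : mid u = A * rexp (Real.log (ρ₀ (y+u)) + -a * ‖u‖^2) := by
      have h : mid u = ρ₀ (y + u) * (A * rexp (-a * ‖u‖^2)) := rfl
      rw [h, Real.exp_add, Real.exp_log (hpos _)]; ring
    have e2 : upper u = A * rexp ((Real.log (ρ₀ y) + ⟪g y, u⟫ + L * ‖u‖^2) + -a * ‖u‖^2) := by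
      have h : upper u = ρ₀ y * (A * rexp (-(a + -L) * ‖u‖^2 + ⟪g y, u⟫)) := rfl
      rw [h]
      conv_rhs => rw [show (Real.log (ρ₀ y) + ⟪g y, u⟫ + L * ‖u‖^2) + -a * ‖u‖^2
          = Real.log (ρ₀ y) + (-(a + -L) * ‖u‖^2 + ⟪g y, u⟫) by ring,
        Real.exp_add, Real.exp_log (hpos y)]
      ring
    rw [e1, e2]
    have := Real.exp_le_exp.mpr (by linarith : Real.log (ρ₀ (y+u)) + -a * ‖u‖^2
      ≤ (Real.log (ρ₀ y) + ⟪g y, u⟫ + L * ‖u‖^2) + -a * ‖u‖^2)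
    nlinarith [Real.exp_pos (Real.log (ρ₀ (y+u)) + -a * ‖u‖^2)]
  have hlle : ∀ u : E, lower u ≤ mid u := by
    intro u
    have h1 : Real.log (ρ₀ y) + ⟪g y, u⟫ - L * ‖u‖^2 ≤ Real.log (ρ₀ (y + u)) := by
      have := (abs_le.mp (htay y u)).1
      linarith
    have e1 : mid u = A * rexp (Real.log (ρ₀ (y+u)) + -a * ‖u‖^2) := by
      have h : mid u = ρ₀ (y + u) * (A * rexp (-a * ‖u‖^2)) := rfl
      rw [h, Real.exp_add, Real.exp_log (hpos _)]; ring
    have e2 : lower u = A * rexp ((Real.log (ρ₀ y) + ⟪g y, u⟫ - L * ‖u‖^2) + -a * ‖u‖^2) := by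
      have h : lower u = ρ₀ y * (A * rexp (-(a + L) * ‖u‖^2 + ⟪g y, u⟫)) := rfl
      rw [h]
      conv_rhs => rw [show (Real.log (ρ₀ y) + ⟪g y, u⟫ - L * ‖u‖^2) + -a * ‖u‖^2
          = Real.log (ρ₀ y) + (-(a + L) * ‖u‖^2 + ⟪g y, u⟫) by ring,
        Real.exp_add, Real.exp_log (hpos y)]
      ring
    rw [e1, e2]
    have := Real.exp_le_exp.mpr (by linarith : (Real.log (ρ₀ y) + ⟪g y, u⟫ - L * ‖u‖^2)
      + -a * ‖u‖^2 ≤ Real.log (ρ₀ (y+u)) + -a * ‖u‖^2)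
    nlinarith [Real.exp_pos ((Real.log (ρ₀ y) + ⟪g y, u⟫ - L * ‖u‖^2) + -a * ‖u‖^2)]
  -- integrability
  have hiu : Integrable upper := by
    rw [hupper]
    exact ((integrable_rexp_quad _ hbm (g y)).const_mul A).const_mul (ρ₀ y)
  have hil : Integrable lower := by
    rw [hlower]
    exact ((integrable_rexp_quad _ hbp (g y)).const_mul A).const_mul (ρ₀ y)
  have hmcont : Continuous mid := by
    rw [hmid]
    fun_prop
  have him : Integrable mid := by
    refine hiu.mono' hmcont.aestronglyMeasurable (Eventually.of_forall fun u => ?_)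
    rw [Real.norm_eq_abs, abs_of_nonneg (mul_nonneg (hpos _).le
      (mul_nonneg hApos.le (Real.exp_pos _).le) : (0:ℝ) ≤ mid u)]
    exact hmle u
  -- the values of the side integrals
  have hvu : ∫ u : E, upper u
      = ρ₀ y * ((1 - t - 2*t*L) ^ (-(d:ℝ)/2) * rexp ((t/(2*(1 - t - 2*t*L))) * ‖g y‖^2)) := by
    rw [hupper, hA]
    have := gauss_side (d := d) t (-L) ht (by linarith [hcm] : 0 < 1 - t + 2*t*(-L)) (ρ₀ y) (g y)
    rw [show 1 - t + 2*t*(-L) = 1 - t - 2*t*L by ring] at this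
    exact this
  have hvl : ∫ u : E, lower u
      = ρ₀ y * ((1 - t + 2*t*L) ^ (-(d:ℝ)/2) * rexp ((t/(2*(1 - t + 2*t*L))) * ‖g y‖^2)) := by
    rw [hlower, hA]
    exact gauss_side (d := d) t L ht hcp (ρ₀ y) (g y)
  have hre : rho d μ t (Real.sqrt (1-t) • y) = ∫ u : E, mid u := by
    rw [rho_eq μ ρ₀ hdensity hpos hcont t ht ht1 y]
  have h1 : rho d μ t (Real.sqrt (1-t) • y) ≤ ∫ u : E, upper u := by
    rw [hre]
    exact integral_mono him hiu hmle
  have h2 : ∫ u : E, lower u ≤ rho d μ t (Real.sqrt (1-t) • y) := by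
    rw [hre]
    exact integral_mono hil him hlle
  have hlpos : 0 < ∫ u : E, lower u := by
    rw [hvl]
    exact mul_pos (hpos y) (mul_pos (Real.rpow_pos_of_pos hcp _) (Real.exp_pos _))
  have hrpos : 0 < rho d μ t (Real.sqrt (1-t) • y) := lt_of_lt_of_le hlpos h2
  refine ⟨hrpos, ?_, ?_⟩
  · have e : Real.log (∫ u : E, upper u) = Real.log (ρ₀ y)
        + Real.log ((1 - t - 2*t*L) ^ (-(d:ℝ)/2))
        + (t/(2*(1 - t - 2*t*L))) * ‖g y‖^2 := by
      rw [hvu, Real.log_mul (hpos y).ne'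
          (mul_pos (Real.rpow_pos_of_pos hcm _) (Real.exp_pos _)).ne',
        Real.log_mul (Real.rpow_pos_of_pos hcm _).ne' (Real.exp_ne_zero _), Real.log_exp]
      ring
    rw [← e]
    exact Real.log_le_log hrpos h1
  · have e : Real.log (∫ u : E, lower u) = Real.log (ρ₀ y)
        + Real.log ((1 - t + 2*t*L) ^ (-(d:ℝ)/2))
        + (t/(2*(1 - t + 2*t*L))) * ‖g y‖^2 := by
      rw [hvl, Real.log_mul (hpos y).ne'
          (mul_pos (Real.rpow_pos_of_pos hcp _) (Real.exp_pos _)).ne',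
        Real.log_mul (Real.rpow_pos_of_pos hcp _).ne' (Real.exp_ne_zero _), Real.log_exp]
      ring
    rw [← e]
    exact Real.log_le_log hlpos h2

end Sandwich

lemma integral_poly_gauss (P Q R : ℝ) :
    ∫ z : E, (P + Q * ‖z‖ + R * ‖z‖^2) * stdGaussianDensity d z
      = P + Q * (∫ z : E, ‖z‖ * stdGaussianDensity d z)
        + R * (∫ z : E, ‖z‖^2 * stdGaussianDensity d z) := by
  have h1 : (fun z : E => ‖z‖ * stdGaussianDensity d z)
      = fun z : E => ‖z‖^1 * stdGaussianDensity d z := by funext z; rw [pow_one]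
  have e : (fun z : E => (P + Q * ‖z‖ + R * ‖z‖^2) * stdGaussianDensity d z)
      = fun z : E => P * stdGaussianDensity d z + (Q * (‖z‖^1 * stdGaussianDensity d z)
        + R * (‖z‖^2 * stdGaussianDensity d z)) := by
    funext z; ring
  rw [e, integral_add (f := fun z : E => P * stdGaussianDensity d z)
      (g := fun z : E => Q * (‖z‖^1 * stdGaussianDensity d z)
        + R * (‖z‖^2 * stdGaussianDensity d z))
      (integrable_gauss.const_mul P)
      (((integrable_pow_gauss 1 (by norm_num)).const_mul Q).add
        ((integrable_pow_gauss 2 (by norm_num)).const_mul R)),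
    integral_add (f := fun z : E => Q * (‖z‖^1 * stdGaussianDensity d z))
      (g := fun z : E => R * (‖z‖^2 * stdGaussianDensity d z))
      ((integrable_pow_gauss 1 (by norm_num)).const_mul Q)
      ((integrable_pow_gauss 2 (by norm_num)).const_mul R),
    MeasureTheory.integral_const_mul, MeasureTheory.integral_const_mul,
    MeasureTheory.integral_const_mul, gauss_total, mul_one, h1]
  ring

lemma integrable_poly_gauss (P Q R : ℝ) :
    Integrable (fun z : E => (P + Q * ‖z‖ + R * ‖z‖^2) * stdGaussianDensity d z) := by
  have e : (fun z : E => (P + Q * ‖z‖ + R * ‖z‖^2) * stdGaussianDensity d z)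
      = fun z : E => P * stdGaussianDensity d z + (Q * (‖z‖^1 * stdGaussianDensity d z)
        + R * (‖z‖^2 * stdGaussianDensity d z)) := by
    funext z; ring
  rw [e]
  exact (integrable_gauss.const_mul P).add
    (((integrable_pow_gauss 1 (by norm_num)).const_mul Q).add
      ((integrable_pow_gauss 2 (by norm_num)).const_mul R))

lemma rho_cont (μ : Measure (EuclideanSpace ℝ (Fin d))) [IsProbabilityMeasure μ]
    (t : ℝ) (ht : 0 < t) : Continuous (rho d μ t) := by
  apply MeasureTheory.continuous_of_dominated
    (bound := fun _ : E => (2*π*t) ^ (-(d:ℝ)/2))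
  · intro x
    apply Continuous.aestronglyMeasurable
    unfold heatKernel
    fun_prop
  · intro x
    refine Eventually.of_forall fun x₀ => ?_
    rw [Real.norm_eq_abs, heatKernel, abs_of_nonneg (by positivity)]
    have h1 : rexp (-‖x - Real.sqrt (1 - t) • x₀‖ ^ 2 / (2 * t)) ≤ 1 := by
      rw [Real.exp_le_one_iff]
      have : (0:ℝ) < 2*t := by linarith
      apply div_nonpos_of_nonpos_of_nonneg
      · exact neg_nonpos.mpr (by positivity)
      · positivity
    nlinarith [Real.rpow_pos_of_pos (show (0:ℝ) < 2*π*t by positivity) (-(d:ℝ)/2)]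
  · exact integrable_const _
  · refine Eventually.of_forall fun x₀ => ?_
    unfold heatKernel
    fun_prop

lemma rho_pos (μ : Measure (EuclideanSpace ℝ (Fin d)))
    (ρ₀ : EuclideanSpace ℝ (Fin d) → ℝ) (L : ℝ)
    (hdensity : μ = volume.withDensity (fun x => ENNReal.ofReal (ρ₀ x)))
    (hpos : ∀ x, 0 < ρ₀ x) (hcont : Continuous ρ₀) (hL0 : 0 ≤ L)
    (htay : ∀ x u : EuclideanSpace ℝ (Fin d),
      |Real.log (ρ₀ (x + u)) - Real.log (ρ₀ x)
        - ⟪gradient (fun y => Real.log (ρ₀ y)) x, u⟫| ≤ L * ‖u‖ ^ 2)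
    (t : ℝ) (ht : 0 < t) (ht2 : t < 1/2) (htL : 2*t*L < 1/2) (x : E) :
    0 < rho d μ t x := by
  have hs : (0:ℝ) < Real.sqrt (1-t) := Real.sqrt_pos.mpr (by linarith)
  have hx : x = Real.sqrt (1-t) • ((Real.sqrt (1-t))⁻¹ • x) := (smul_inv_smul₀ hs.ne' x).symm
  rw [hx]
  exact (rho_log_bounds μ ρ₀ L hdensity hpos hcont hL0 htay t ht ht2 htL _).1

set_option maxHeartbeats 1000000 in
lemma condexp_bounds (μ : Measure (EuclideanSpace ℝ (Fin d))) [IsProbabilityMeasure μ]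
    (ρ₀ : EuclideanSpace ℝ (Fin d) → ℝ) (L : ℝ)
    (hdensity : μ = volume.withDensity (fun x => ENNReal.ofReal (ρ₀ x)))
    (hpos : ∀ x, 0 < ρ₀ x) (hcont : Continuous ρ₀) (hL0 : 0 ≤ L)
    (htay : ∀ x u : EuclideanSpace ℝ (Fin d),
      |Real.log (ρ₀ (x + u)) - Real.log (ρ₀ x)
        - ⟪gradient (fun y => Real.log (ρ₀ y)) x, u⟫| ≤ L * ‖u‖ ^ 2)
    (hlip : ∀ v x : EuclideanSpace ℝ (Fin d),
      ‖gradient (fun y => Real.log (ρ₀ y)) v - gradient (fun y => Real.log (ρ₀ y)) x‖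
        ≤ L * ‖v - x‖)
    (x₀ : EuclideanSpace ℝ (Fin d))
    (t : ℝ) (ht : 0 < t) (ht2 : t < 1/2) (htL : 2*t*L < 1/2) :
    (Real.log (ρ₀ x₀) + Real.log ((1 - t + 2*t*L) ^ (-(d:ℝ)/2))
        + (-(‖gradient (fun y => Real.log (ρ₀ y)) x₀‖ * (Real.sqrt t / Real.sqrt (1-t))))
          * (∫ z : E, ‖z‖ * stdGaussianDensity d z)
        + (-(L * (Real.sqrt t / Real.sqrt (1-t))^2))
          * (∫ z : E, ‖z‖^2 * stdGaussianDensity d z)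
      ≤ condExpX0 d t x₀ (fun x => Real.log (rho d μ t x)))
    ∧ (condExpX0 d t x₀ (fun x => Real.log (rho d μ t x))
      ≤ Real.log (ρ₀ x₀) + Real.log ((1 - t - 2*t*L) ^ (-(d:ℝ)/2))
        + (t/(2*(1 - t - 2*t*L))) * (2*‖gradient (fun y => Real.log (ρ₀ y)) x₀‖^2)
        + (‖gradient (fun y => Real.log (ρ₀ y)) x₀‖ * (Real.sqrt t / Real.sqrt (1-t)))
          * (∫ z : E, ‖z‖ * stdGaussianDensity d z)
        + ((L + (t/(2*(1 - t - 2*t*L))) * (2*L^2)) * (Real.sqrt t / Real.sqrt (1-t))^2)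
          * (∫ z : E, ‖z‖^2 * stdGaussianDensity d z)) := by
  set g := gradient (fun y => Real.log (ρ₀ y)) with hg
  set c := Real.sqrt t / Real.sqrt (1-t) with hc
  have h1t : (0:ℝ) < 1 - t := by linarith
  have hst : (0:ℝ) < Real.sqrt (1-t) := Real.sqrt_pos.mpr h1t
  have hc0 : 0 ≤ c := by rw [hc]; positivity
  have hcm : 0 < 1 - t - 2*t*L := by linarith
  have hcp : 0 < 1 - t + 2*t*L := by nlinarith
  set βm := t/(2*(1 - t - 2*t*L)) with hβm
  have hβm0 : 0 ≤ βm := by rw [hβm]; positivity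
  set Dm := Real.log ((1 - t - 2*t*L) ^ (-(d:ℝ)/2)) with hDm
  set Dp := Real.log ((1 - t + 2*t*L) ^ (-(d:ℝ)/2)) with hDp
  -- rewrite condExpX0
  have hxz : ∀ z : E, Real.sqrt (1-t) • x₀ + Real.sqrt t • z
      = Real.sqrt (1-t) • (x₀ + c • z) := by
    intro z
    rw [smul_add, smul_smul, hc]
    congr 2
    field_simp
  have hce : condExpX0 d t x₀ (fun x => Real.log (rho d μ t x))
      = ∫ z : E, Real.log (rho d μ t (Real.sqrt (1-t) • (x₀ + c • z)))
          * stdGaussianDensity d z := by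
    unfold condExpX0
    congr 1
    funext z
    rw [hxz z]
  -- pointwise facts
  have key := fun z : E =>
    rho_log_bounds μ ρ₀ L hdensity hpos hcont hL0 htay t ht ht2 htL (x₀ + c • z)
  have hnorm : ∀ z : E, ‖c • z‖ = c * ‖z‖ := by
    intro z
    rw [norm_smul, Real.norm_eq_abs, abs_of_nonneg hc0]
  have hfub : ∀ z : E, Real.log (ρ₀ (x₀ + c • z))
      ≤ Real.log (ρ₀ x₀) + ‖g x₀‖ * (c * ‖z‖) + L * (c * ‖z‖)^2 := by
    intro z
    have h := (abs_le.mp (htay x₀ (c • z))).2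
    have hin : ⟪g x₀, c • z⟫ ≤ ‖g x₀‖ * (c * ‖z‖) := by
      calc ⟪g x₀, c • z⟫ ≤ ‖g x₀‖ * ‖c • z‖ := real_inner_le_norm _ _
      _ = ‖g x₀‖ * (c * ‖z‖) := by rw [hnorm z]
    have hn2 : ‖c • z‖^2 = (c * ‖z‖)^2 := by rw [hnorm z]
    nlinarith
  have hflb : ∀ z : E, Real.log (ρ₀ x₀) - ‖g x₀‖ * (c * ‖z‖) - L * (c * ‖z‖)^2
      ≤ Real.log (ρ₀ (x₀ + c • z)) := by
    intro z
    have h := (abs_le.mp (htay x₀ (c • z))).1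
    have hin : -(‖g x₀‖ * (c * ‖z‖)) ≤ ⟪g x₀, c • z⟫ := by
      have := abs_real_inner_le_norm (g x₀) (c • z)
      rw [hnorm z] at this
      have := (abs_le.mp this).1
      linarith
    have hn2 : ‖c • z‖^2 = (c * ‖z‖)^2 := by rw [hnorm z]
    nlinarith
  have hgub : ∀ z : E, ‖g (x₀ + c • z)‖^2 ≤ 2*‖g x₀‖^2 + 2*L^2*(c*‖z‖)^2 := by
    intro z
    have h := hlip (x₀ + c • z) x₀
    rw [add_sub_cancel_left, hnorm z] at h
    have htri : ‖g (x₀ + c • z)‖ ≤ ‖g x₀‖ + L * (c * ‖z‖) := by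
      have := norm_sub_norm_le (g (x₀ + c • z)) (g x₀)
      linarith
    have he : 2*L^2*(c*‖z‖)^2 = 2*(L * (c * ‖z‖))^2 := by ring
    rw [he]
    nlinarith [norm_nonneg (g (x₀ + c • z)), norm_nonneg (g x₀),
      mul_nonneg (mul_nonneg hL0 hc0) (norm_nonneg z),
      sq_nonneg (‖g x₀‖ - L * (c * ‖z‖))]
  have hγ : ∀ z : E, 0 < stdGaussianDensity d z := by
    intro z
    unfold stdGaussianDensity
    positivity
  -- pointwise sandwich for the integrand
  set φ := fun z : E => Real.log (rho d μ t (Real.sqrt (1-t) • (x₀ + c • z)))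
    * stdGaussianDensity d z with hφ
  set P := Real.log (ρ₀ x₀) + Dm + βm * (2*‖g x₀‖^2) with hP
  set Q := ‖g x₀‖ * c with hQ
  set R := (L + βm * (2*L^2)) * c^2 with hR
  set P' := Real.log (ρ₀ x₀) + Dp with hP'
  have hub : ∀ z : E, φ z ≤ (P + Q * ‖z‖ + R * ‖z‖^2) * stdGaussianDensity d z := by
    intro z
    have h1 := (key z).2.1
    have h2 := hfub z
    have h3 := mul_le_mul_of_nonneg_left (hgub z) hβm0
    have e1 : ‖g x₀‖ * (c * ‖z‖) = Q * ‖z‖ := by rw [hQ]; ring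
    have e2 : L * (c * ‖z‖)^2 + βm * (2*L^2*(c*‖z‖)^2) = R * ‖z‖^2 := by rw [hR]; ring
    have e3 : βm * (2*‖g x₀‖^2 + 2*L^2*(c*‖z‖)^2)
        = βm * (2*‖g x₀‖^2) + βm * (2*L^2*(c*‖z‖)^2) := by ring
    have hlog : Real.log (rho d μ t (Real.sqrt (1-t) • (x₀ + c • z)))
        ≤ P + Q * ‖z‖ + R * ‖z‖^2 := by
      rw [hP]
      linarith [h1, h2, h3, e1, e2, e3]
    exact mul_le_mul_of_nonneg_right hlog (hγ z).le
  have hlb : ∀ z : E, (P' + (-(‖g x₀‖ * c)) * ‖z‖ + (-(L * c^2)) * ‖z‖^2)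
      * stdGaussianDensity d z ≤ φ z := by
    intro z
    have h1 := (key z).2.2
    have h2 := hflb z
    have h4 : 0 ≤ (t/(2*(1 - t + 2*t*L))) * ‖g (x₀ + c • z)‖^2 := by positivity
    have e1 : (-(‖g x₀‖ * c)) * ‖z‖ = -(‖g x₀‖ * (c * ‖z‖)) := by ring
    have e2 : (-(L * c^2)) * ‖z‖^2 = -(L * (c * ‖z‖)^2) := by ring
    have hlog : P' + (-(‖g x₀‖ * c)) * ‖z‖ + (-(L * c^2)) * ‖z‖^2
        ≤ Real.log (rho d μ t (Real.sqrt (1-t) • (x₀ + c • z))) := by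
      rw [hP']
      linarith [h1, h2, h4, e1, e2]
    exact mul_le_mul_of_nonneg_right hlog (hγ z).le
  -- integrability of φ
  have hφcont : Continuous φ := by
    rw [hφ]
    have hrc : Continuous (rho d μ t) := rho_cont μ t ht
    have hrpos : ∀ x : E, rho d μ t x ≠ 0 := fun x =>
      (rho_pos μ ρ₀ L hdensity hpos hcont hL0 htay t ht ht2 htL x).ne'
    apply Continuous.mul
    · apply Continuous.log
      · fun_prop
      · intro z
        exact hrpos _
    · exact continuous_gauss
  have hiu : Integrable (fun z : E => (P + Q * ‖z‖ + R * ‖z‖^2) * stdGaussianDensity d z) :=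
    integrable_poly_gauss P Q R
  have hil : Integrable (fun z : E => (P' + (-(‖g x₀‖ * c)) * ‖z‖ + (-(L * c^2)) * ‖z‖^2)
      * stdGaussianDensity d z) := integrable_poly_gauss _ _ _
  have hiφ : Integrable φ := by
    refine (hil.abs.add hiu.abs).mono' hφcont.aestronglyMeasurable
      (Eventually.of_forall fun z => ?_)
    simp only [Pi.add_apply]
    rw [Real.norm_eq_abs, abs_le]
    have hl := hlb z
    have hu := hub z
    have h2 := neg_abs_le ((P' + (-(‖g x₀‖ * c)) * ‖z‖ + (-(L * c^2)) * ‖z‖^2)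
      * stdGaussianDensity d z)
    have h3 := abs_nonneg ((P + Q * ‖z‖ + R * ‖z‖^2) * stdGaussianDensity d z)
    have h4 := le_abs_self ((P + Q * ‖z‖ + R * ‖z‖^2) * stdGaussianDensity d z)
    have h5 := abs_nonneg ((P' + (-(‖g x₀‖ * c)) * ‖z‖ + (-(L * c^2)) * ‖z‖^2)
      * stdGaussianDensity d z)
    constructor
    · linarith
    · linarith
  constructor
  · rw [hce]
    calc Real.log (ρ₀ x₀) + Dp + (-(‖g x₀‖ * c)) * (∫ z : E, ‖z‖ * stdGaussianDensity d z)
        + (-(L * c^2)) * (∫ z : E, ‖z‖^2 * stdGaussianDensity d z)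
        = ∫ z : E, (P' + (-(‖g x₀‖ * c)) * ‖z‖ + (-(L * c^2)) * ‖z‖^2)
            * stdGaussianDensity d z := by
          rw [integral_poly_gauss, hP']
    _ ≤ ∫ z : E, φ z := integral_mono hil hiφ hlb
  · rw [hce]
    calc (∫ z : E, φ z) ≤ ∫ z : E, (P + Q * ‖z‖ + R * ‖z‖^2) * stdGaussianDensity d z :=
          integral_mono hiφ hiu hub
    _ = Real.log (ρ₀ x₀) + Dm + βm * (2*‖g x₀‖^2)
        + (‖g x₀‖ * c) * (∫ z : E, ‖z‖ * stdGaussianDensity d z)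
        + ((L + βm * (2*L^2)) * c^2) * (∫ z : E, ‖z‖^2 * stdGaussianDensity d z) := by
          rw [integral_poly_gauss, hP, hQ, hR]

end AuxLemmas

/-- **Proposition 2.** If `X₀` has a smooth density `ρ₀` with
`sup_x ‖∇² log ρ₀(x)‖ < ∞` (operator norm of the Hessian), then for every `x₀ ∈ ℝ^d`,
`lim_{t→0⁺} E[log ρ_t(X_t) | X₀ = x₀] = log ρ₀(x₀)`. -/
theorem limit_condExp_log_density_at_zero
    (d : ℕ) (hd : 1 ≤ d) (μ : Measure (EuclideanSpace ℝ (Fin d))) [IsProbabilityMeasure μ]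
    (ρ₀ : EuclideanSpace ℝ (Fin d) → ℝ)
    (hdensity : μ = volume.withDensity (fun x => ENNReal.ofReal (ρ₀ x)))
    (hpos : ∀ x, 0 < ρ₀ x) (hsmooth : ContDiff ℝ (⊤ : ℕ∞) ρ₀)
    (hhess : ∃ L : ℝ, ∀ x,
      ‖fderiv ℝ (gradient (fun y => Real.log (ρ₀ y))) x‖ ≤ L)
    (x₀ : EuclideanSpace ℝ (Fin d)) :
    Tendsto (fun t => condExpX0 d t x₀ (fun x => Real.log (rho d μ t x)))
      (nhdsWithin 0 (Set.Ioi 0)) (nhds (Real.log (ρ₀ x₀))) := by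
  obtain ⟨L, hL⟩ := hhess
  have hL0 : 0 ≤ L := le_trans (norm_nonneg _) (hL 0)
  have hf : ContDiff ℝ (⊤ : ℕ∞) (fun y => Real.log (ρ₀ y)) :=
    hsmooth.log fun x => (hpos x).ne'
  have htay := taylor_bound (fun y => Real.log (ρ₀ y)) L hf hL
  have hlip := grad_lip (fun y => Real.log (ρ₀ y)) L hf hL
  have hcont : Continuous ρ₀ := hsmooth.continuous
  set G := ‖gradient (fun y => Real.log (ρ₀ y)) x₀‖ with hG
  set I1 := ∫ z : EuclideanSpace ℝ (Fin d), ‖z‖ * stdGaussianDensity d z with hI1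
  set I2 := ∫ z : EuclideanSpace ℝ (Fin d), ‖z‖^2 * stdGaussianDensity d z with hI2
  set l := nhdsWithin (0:ℝ) (Set.Ioi 0) with hl
  have hle : l ≤ nhds 0 := nhdsWithin_le_nhds
  -- basic limits
  have hsq : Tendsto (fun t : ℝ => Real.sqrt t / Real.sqrt (1-t)) l (nhds 0) := by
    have h1 : Tendsto (fun t : ℝ => Real.sqrt t) (nhds 0) (nhds 0) :=
      Real.continuous_sqrt.tendsto' 0 0 Real.sqrt_zero
    have h2 : Tendsto (fun t : ℝ => Real.sqrt (1-t)) (nhds 0) (nhds 1) := by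
      have : Continuous (fun t : ℝ => Real.sqrt (1-t)) :=
        Real.continuous_sqrt.comp (continuous_const.sub continuous_id)
      have := this.tendsto' 0 1 (by norm_num)
      exact this
    have := h1.div h2 one_ne_zero
    simp only [div_one] at this
    exact this.mono_left hle
  have hmm : Tendsto (fun t : ℝ => 1 - t - 2*t*L) (nhds 0) (nhds 1) := by
    have : Continuous (fun t : ℝ => 1 - t - 2*t*L) := by fun_prop
    exact this.tendsto' 0 1 (by norm_num)
  have hmp : Tendsto (fun t : ℝ => 1 - t + 2*t*L) (nhds 0) (nhds 1) := by
    have : Continuous (fun t : ℝ => 1 - t + 2*t*L) := by fun_prop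
    exact this.tendsto' 0 1 (by norm_num)
  have hDm : Tendsto (fun t : ℝ => Real.log ((1 - t - 2*t*L) ^ (-(d:ℝ)/2))) l (nhds 0) := by
    have h2 := hmm.rpow_const (p := -(d:ℝ)/2) (Or.inl one_ne_zero)
    rw [Real.one_rpow] at h2
    have h3 := ((Real.continuousAt_log one_ne_zero).tendsto.comp h2)
    rw [Real.log_one] at h3
    exact h3.mono_left hle
  have hDp : Tendsto (fun t : ℝ => Real.log ((1 - t + 2*t*L) ^ (-(d:ℝ)/2))) l (nhds 0) := by
    have h2 := hmp.rpow_const (p := -(d:ℝ)/2) (Or.inl one_ne_zero)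
    rw [Real.one_rpow] at h2
    have h3 := ((Real.continuousAt_log one_ne_zero).tendsto.comp h2)
    rw [Real.log_one] at h3
    exact h3.mono_left hle
  have hβ : Tendsto (fun t : ℝ => t/(2*(1 - t - 2*t*L))) l (nhds 0) := by
    have h2 : Tendsto (fun t : ℝ => 2*(1 - t - 2*t*L)) (nhds 0) (nhds 2) := by
      have := hmm.const_mul (2:ℝ)
      simpa using this
    have h3 : Tendsto (fun t : ℝ => t/(2*(1 - t - 2*t*L))) (nhds 0) (nhds ((0:ℝ)/2)) :=
      (continuous_id.tendsto (0:ℝ)).div h2 two_ne_zero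
    rw [zero_div] at h3
    exact h3.mono_left hle
  -- the bounding functions
  have hU : Tendsto (fun t : ℝ => Real.log (ρ₀ x₀) + Real.log ((1 - t - 2*t*L) ^ (-(d:ℝ)/2))
      + (t/(2*(1 - t - 2*t*L))) * (2*G^2)
      + (G * (Real.sqrt t / Real.sqrt (1-t))) * I1
      + ((L + (t/(2*(1 - t - 2*t*L))) * (2*L^2)) * (Real.sqrt t / Real.sqrt (1-t))^2) * I2)
      l (nhds (Real.log (ρ₀ x₀))) := by
    have := ((((tendsto_const_nhds (x := Real.log (ρ₀ x₀)) (f := l)).add hDm).add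
        (hβ.mul_const (2*G^2))).add ((hsq.const_mul G).mul_const I1)).add
      (((tendsto_const_nhds (x := L) (f := l)).add (hβ.mul_const (2*L^2))).mul
        ((hsq.pow 2)) |>.mul_const I2)
    simpa using this
  have hLo : Tendsto (fun t : ℝ => Real.log (ρ₀ x₀) + Real.log ((1 - t + 2*t*L) ^ (-(d:ℝ)/2))
      + (-(G * (Real.sqrt t / Real.sqrt (1-t)))) * I1
      + (-(L * (Real.sqrt t / Real.sqrt (1-t))^2)) * I2)
      l (nhds (Real.log (ρ₀ x₀))) := by
    have := (((tendsto_const_nhds (x := Real.log (ρ₀ x₀)) (f := l)).add hDp).add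
        (((hsq.const_mul G).neg).mul_const I1)).add
      ((((hsq.pow 2).const_mul L).neg).mul_const I2)
    simpa using this
  -- squeeze
  have htb : (0:ℝ) < min (1/2) (1/(4*L+2)) := by positivity
  have hev : ∀ᶠ t in l, t ∈ Set.Ioo (0:ℝ) (min (1/2) (1/(4*L+2))) := by
    rw [hl]
    exact Ioo_mem_nhdsGT_of_mem ⟨le_refl 0, htb⟩
  refine tendsto_of_tendsto_of_tendsto_of_le_of_le' hLo hU ?_ ?_
  · filter_upwards [hev] with t ht
    have ht0 : 0 < t := ht.1
    have ht2 : t < 1/2 := lt_of_lt_of_le ht.2 (min_le_left _ _)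
    have htL : 2*t*L < 1/2 := by
      have h := lt_of_lt_of_le ht.2 (min_le_right _ _)
      have := (lt_div_iff₀ (by positivity : (0:ℝ) < 4*L+2)).mp h
      nlinarith
    exact (condexp_bounds μ ρ₀ L hdensity hpos hcont hL0 htay hlip x₀ t ht0 ht2 htL).1
  · filter_upwards [hev] with t ht
    have ht0 : 0 < t := ht.1
    have ht2 : t < 1/2 := lt_of_lt_of_le ht.2 (min_le_left _ _)
    have htL : 2*t*L < 1/2 := by
      have h := lt_of_lt_of_le ht.2 (min_le_right _ _)
      have := (lt_div_iff₀ (by positivity : (0:ℝ) < 4*L+2)).mp h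
      nlinarith
    exact (condexp_bounds μ ρ₀ L hdensity hpos hcont hL0 htay hlip x₀ t ht0 ht2 htL).2
end
end

section
/- For every t ∈ (0,1) and every y ∈ ℝ^d, the function g(t, y) := log ρ_t(√(1−t) y) satisfies ∂g/∂t (t, y) = −d/(2t) + (1/(2t²)) ∫ ‖y − x₀‖₂² p_{X₀|X_t}(dx₀ | √(1−t) y), where p_{X₀|X_t}(dx₀ | x) denotes the conditional law of X₀ given X_t = x. -/
/-!
Substituting `x = √(1-s) • y` turns the Gaussian kernel into the profile
`(2πs)^(-d/2) exp(-(1-s) r / (2s))` of `r = ‖y - x₀‖²`, whose `s`-derivative is the profile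
times `-d/(2s) + r/(2s²)`. Since `r e^{-cr} ≤ 1/c`, this derivative is bounded uniformly in `r`
for `s` in a compact subinterval of `(0, 1)`, so dominated convergence differentiates
`ρ_s(√(1-s) • y)` under the integral; dividing by `ρ_t` gives the logarithmic derivative.
-/

open MeasureTheory Real Filter
open scoped ENNReal

noncomputable section

def heatProfile (d : ℕ) (s r : ℝ) : ℝ :=
  (2 * π * s) ^ (-(d : ℝ) / 2) * exp (-(1 - s) * r / (2 * s))

def heatProfileDeriv (d : ℕ) (s r : ℝ) : ℝ :=
  -(d / (2 * s)) * heatProfile d s r + 1 / (2 * s ^ 2) * (r * heatProfile d s r)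

section heatProfile

variable {d : ℕ} {s r : ℝ}

lemma heatKernel_sqrt_smul (hs : s ≤ 1) (y x₀ : EuclideanSpace ℝ (Fin d)) :
    heatKernel d s (√(1 - s) • y) x₀ = heatProfile d s (‖y - x₀‖ ^ 2) := by
  rw [heatKernel, heatProfile, ← smul_sub, norm_smul, norm_of_nonneg (sqrt_nonneg _), mul_pow,
    sq_sqrt (by linarith)]
  ring_nf

lemma rho_sqrt_smul (μ : Measure (EuclideanSpace ℝ (Fin d))) (hs : s ≤ 1)
    (y : EuclideanSpace ℝ (Fin d)) :
    rho d μ s (√(1 - s) • y) = ∫ x₀, heatProfile d s (‖y - x₀‖ ^ 2) ∂μ := by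
  simp only [rho, heatKernel_sqrt_smul hs]

lemma heatProfile_pos (hs : 0 < s) : 0 < heatProfile d s r := by
  unfold heatProfile; positivity

lemma continuous_heatProfile (d : ℕ) (s : ℝ) : Continuous (heatProfile d s) := by
  unfold heatProfile; fun_prop

lemma heatProfile_le (hs₀ : 0 < s) (hs₁ : s ≤ 1) (hr : 0 ≤ r) :
    heatProfile d s r ≤ (2 * π * s) ^ (-(d : ℝ) / 2) :=
  mul_le_of_le_one_right (by positivity) <| exp_le_one_iff.2 <|
    div_nonpos_of_nonpos_of_nonneg (by nlinarith) (by positivity)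

lemma mul_heatProfile_le (hs₀ : 0 < s) (hs₁ : s < 1) :
    r * heatProfile d s r ≤ (2 * π * s) ^ (-(d : ℝ) / 2) * (2 * s / (1 - s)) := by
  set c := (1 - s) / (2 * s)
  have hc : 0 < c := div_pos (by linarith) (by positivity)
  have hexp : r * exp (-(1 - s) * r / (2 * s)) ≤ 1 / c := by
    have h := (mul_exp_neg_le_exp_neg_one (c * r)).trans (exp_le_one_iff.2 (by norm_num))
    have hexponent : -(1 - s) * r / (2 * s) = -(c * r) := by ring
    rw [le_div_iff₀ hc, hexponent]
    linarith
  calc r * heatProfile d s r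
        = (2 * π * s) ^ (-(d : ℝ) / 2) * (r * exp (-(1 - s) * r / (2 * s))) := by
        unfold heatProfile; ring
    _ ≤ (2 * π * s) ^ (-(d : ℝ) / 2) * (1 / c) := by gcongr
    _ = (2 * π * s) ^ (-(d : ℝ) / 2) * (2 * s / (1 - s)) := by rw [one_div_div]

lemma hasDerivAt_heatProfile (d : ℕ) (hs : 0 < s) (r : ℝ) :
    HasDerivAt (fun u => heatProfile d u r) (heatProfileDeriv d s r) s := by
  have hpow := ((hasDerivAt_id s).const_mul (2 * π)).rpow_const (p := -(d : ℝ) / 2)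
    (Or.inl (by positivity))
  have hexp : HasDerivAt (fun u : ℝ => exp (-(1 - u) * r / (2 * u)))
      (exp (-(1 - s) * r / (2 * s)) * ((r * (2 * s) - -(1 - s) * r * 2) / (2 * s) ^ 2)) s := by
    refine HasDerivAt.exp (HasDerivAt.div ?_ ?_ (by positivity))
    · simpa using ((hasDerivAt_id s).const_sub 1).neg.mul_const r
    · simpa using (hasDerivAt_id s).const_mul (2 : ℝ)
  refine (hpow.mul hexp).congr_deriv ?_
  simp only [heatProfileDeriv, heatProfile, id]
  rw [rpow_sub (by positivity), rpow_one]
  field_simp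
  ring

lemma norm_heatProfileDeriv_le (hs₀ : 0 < s) (hs₁ : s < 1) (hr : 0 ≤ r) :
    ‖heatProfileDeriv d s r‖ ≤
      (2 * π * s) ^ (-(d : ℝ) / 2) * (d / (2 * s) + 1 / (s * (1 - s))) := by
  have hk := heatProfile_pos (d := d) (r := r) hs₀
  calc ‖heatProfileDeriv d s r‖
        ≤ d / (2 * s) * heatProfile d s r + 1 / (2 * s ^ 2) * (r * heatProfile d s r) := by
        refine (norm_add_le _ _).trans_eq ?_
        rw [norm_mul, norm_mul, norm_neg, norm_of_nonneg (by positivity),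
          norm_of_nonneg hk.le, norm_of_nonneg (by positivity), norm_of_nonneg (by positivity)]
    _ ≤ d / (2 * s) * (2 * π * s) ^ (-(d : ℝ) / 2)
          + 1 / (2 * s ^ 2) * ((2 * π * s) ^ (-(d : ℝ) / 2) * (2 * s / (1 - s))) :=
        add_le_add (mul_le_mul_of_nonneg_left (heatProfile_le hs₀ hs₁.le hr) (by positivity))
          (mul_le_mul_of_nonneg_left (mul_heatProfile_le hs₀ hs₁) (by positivity))
    _ = _ := by
        have : 1 - s ≠ 0 := by linarith
        field_simp

lemma exists_norm_heatProfileDeriv_le (d : ℕ) {a b : ℝ} (ha : 0 < a) (hb : b < 1) :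
    ∃ C, ∀ s ∈ Set.Icc a b, ∀ r, 0 ≤ r → ‖heatProfileDeriv d s r‖ ≤ C := by
  have hcont : ContinuousOn
      (fun s : ℝ => (2 * π * s) ^ (-(d : ℝ) / 2) * (d / (2 * s) + 1 / (s * (1 - s))))
      (Set.Icc a b) := continuousOn_of_forall_continuousAt fun s hs => by
    have h₁ : s * (1 - s) ≠ 0 := mul_ne_zero (by linarith [hs.1]) (by linarith [hs.2])
    have h₂ : 2 * π * s ≠ 0 := by nlinarith [hs.1, pi_pos]
    have h₃ : 2 * s ≠ 0 := by linarith [hs.1]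
    refine (ContinuousAt.rpow_const (by fun_prop) (Or.inl h₂)).mul ?_
    exact (continuousAt_const.div (by fun_prop) h₃).add
      (continuousAt_const.div (by fun_prop) h₁)
  obtain ⟨C, hC⟩ := isCompact_Icc.exists_bound_of_continuousOn hcont
  refine ⟨C, fun s hs r hr => ?_⟩
  exact (norm_heatProfileDeriv_le (by linarith [hs.1]) (by linarith [hs.2]) hr).trans
    ((Real.le_norm_self _).trans (hC s hs))

end heatProfile

section integral

variable {α : Type*} [MeasurableSpace α] (d : ℕ) {μ : Measure α} [IsFiniteMeasure μ]
  {f : α → ℝ} {s : ℝ}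

lemma integrable_heatProfile_comp (hf : AEStronglyMeasurable f μ) (hf₀ : ∀ x, 0 ≤ f x)
    (hs₀ : 0 < s) (hs₁ : s ≤ 1) : Integrable (fun x => heatProfile d s (f x)) μ :=
  .of_bound ((continuous_heatProfile d s).comp_aestronglyMeasurable hf) _ <|
    ae_of_all _ fun x => by
      rw [norm_of_nonneg (heatProfile_pos hs₀).le]
      exact heatProfile_le hs₀ hs₁ (hf₀ x)

lemma integrable_mul_heatProfile_comp (hf : AEStronglyMeasurable f μ) (hf₀ : ∀ x, 0 ≤ f x)
    (hs₀ : 0 < s) (hs₁ : s < 1) : Integrable (fun x => f x * heatProfile d s (f x)) μ :=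
  .of_bound (hf.mul ((continuous_heatProfile d s).comp_aestronglyMeasurable hf)) _ <|
    ae_of_all _ fun x => by
      rw [norm_of_nonneg (mul_nonneg (hf₀ x) (heatProfile_pos hs₀).le)]
      exact mul_heatProfile_le hs₀ hs₁

lemma integral_heatProfile_comp_pos [NeZero μ] (hf : AEStronglyMeasurable f μ)
    (hf₀ : ∀ x, 0 ≤ f x) (hs₀ : 0 < s) (hs₁ : s ≤ 1) :
    0 < ∫ x, heatProfile d s (f x) ∂μ := by
  rw [integral_pos_iff_support_of_nonneg (fun x => (heatProfile_pos hs₀).le)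
    (integrable_heatProfile_comp d hf hf₀ hs₀ hs₁)]
  simp [Function.support, (heatProfile_pos hs₀).ne', NeZero.ne μ]

theorem hasDerivAt_integral_heatProfile (hf : AEStronglyMeasurable f μ) (hf₀ : ∀ x, 0 ≤ f x)
    {t : ℝ} (ht₀ : 0 < t) (ht₁ : t < 1) :
    HasDerivAt (fun s => ∫ x, heatProfile d s (f x) ∂μ)
      (-(d / (2 * t)) * ∫ x, heatProfile d t (f x) ∂μ
        + 1 / (2 * t ^ 2) * ∫ x, f x * heatProfile d t (f x) ∂μ) t := by
  obtain ⟨C, hC⟩ := exists_norm_heatProfileDeriv_le d (a := t / 2) (b := (1 + t) / 2)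
    (by linarith) (by linarith)
  have hint := integrable_heatProfile_comp d hf hf₀ ht₀ ht₁.le
  have hint' := integrable_mul_heatProfile_comp d hf hf₀ ht₀ ht₁
  obtain ⟨-, hderiv⟩ := hasDerivAt_integral_of_dominated_loc_of_deriv_le
    (F' := fun s x => heatProfileDeriv d s (f x))
    (Icc_mem_nhds (by linarith) (by linarith))
    (.of_forall fun s => (continuous_heatProfile d s).comp_aestronglyMeasurable hf) hint
    ((hint.const_mul _).add (hint'.const_mul _)).aestronglyMeasurable
    (ae_of_all _ fun x s hs => hC s hs (f x) (hf₀ x)) (integrable_const C)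
    (ae_of_all _ fun x s hs => hasDerivAt_heatProfile d (by linarith [hs.1]) (f x))
  simp only [heatProfileDeriv] at hderiv
  rwa [integral_add (hint.const_mul _) (hint'.const_mul _), integral_const_mul,
    integral_const_mul] at hderiv

end integral

theorem time_derivative_log_density_general
    (d : ℕ) (μ : Measure (EuclideanSpace ℝ (Fin d))) [IsProbabilityMeasure μ]
    (t : ℝ) (ht₀ : 0 < t) (ht₁ : t < 1) (y : EuclideanSpace ℝ (Fin d)) :
    deriv (fun s => Real.log (rho d μ s (Real.sqrt (1 - s) • y))) t
      = -(d / (2 * t))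
        + (1 / (2 * t ^ 2)) *
          ∫ x₀, ‖y - x₀‖ ^ 2 *
            (heatKernel d t (Real.sqrt (1 - t) • y) x₀
              / rho d μ t (Real.sqrt (1 - t) • y)) ∂μ := by
  have hf : AEStronglyMeasurable (fun x₀ => ‖y - x₀‖ ^ 2) μ := by fun_prop
  have hf₀ (x₀ : EuclideanSpace ℝ (Fin d)) : 0 ≤ ‖y - x₀‖ ^ 2 := by positivity
  have hpos := integral_heatProfile_comp_pos d hf hf₀ ht₀ ht₁.le
  have hlog : HasDerivAt (fun s => log (rho d μ s (√(1 - s) • y))) _ t :=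
    ((hasDerivAt_integral_heatProfile d hf hf₀ ht₀ ht₁).log hpos.ne').congr_of_eventuallyEq <|
      (eventually_lt_nhds ht₁).mono fun s hs => congrArg log (rho_sqrt_smul μ hs.le y)
  rw [hlog.deriv, rho_sqrt_smul μ ht₁.le]
  simp_rw [heatKernel_sqrt_smul ht₁.le, mul_div_assoc', integral_div]
  field_simp

/-- **Claim 1.** For `g(t, y) := log ρ_t(√(1−t)·y)`, one has
`∂g/∂t (t, y) = −d/(2t) + (1/(2t²)) ∫ ‖y − x₀‖² p_{X₀|X_t}(dx₀ | √(1−t)·y)`,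
where the conditional law of `X₀` given `X_t = x` has density
`heatKernel d t x x₀ / ρ_t(x)` with respect to the law `μ` of `X₀`. -/
theorem time_derivative_log_density
    (d : ℕ) (hd : 1 ≤ d) (μ : Measure (EuclideanSpace ℝ (Fin d))) [IsProbabilityMeasure μ]
    (t : ℝ) (ht₀ : 0 < t) (ht₁ : t < 1) (y : EuclideanSpace ℝ (Fin d)) :
    deriv (fun s => Real.log (rho d μ s (Real.sqrt (1 - s) • y))) t
      = -(d / (2 * t))
        + (1 / (2 * t ^ 2)) *
          ∫ x₀, ‖y - x₀‖ ^ 2 *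
            (heatKernel d t (Real.sqrt (1 - t) • y) x₀
              / rho d μ t (Real.sqrt (1 - t) • y)) ∂μ :=
  time_derivative_log_density_general d μ t ht₀ ht₁ y
end
end

section
/- For every t ∈ (0,1) and every x ∈ ℝ^d, tr(∇² log ρ_t(x)) = −d/t − ‖∇log ρ_t(x)‖₂² + (1/t²) ∫ ‖x − √(1−t) x₀‖₂² p_{X₀|X_t}(dx₀ | x), where p_{X₀|X_t}(dx₀ | x) denotes the conditional law of X₀ given X_t = x. -/
open MeasureTheory Real Filter
open scoped ENNReal

noncomputable section

/-- Trace of the Hessian of `f : ℝ^d → ℝ` at `x`, i.e. `∑ᵢ ∂²f/∂xᵢ² (x)`. -/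
def traceHessian (d : ℕ) (f : EuclideanSpace ℝ (Fin d) → ℝ)
    (x : EuclideanSpace ℝ (Fin d)) : ℝ :=
  ∑ i : Fin d,
    fderiv ℝ (fun y => fderiv ℝ f y (EuclideanSpace.single i 1)) x (EuclideanSpace.single i 1)

/-!
`ρ_t` is a Gaussian mixture, and the Gaussian factor and its first two derivatives in `x` are
bounded uniformly in `x₀` (since `r ^ k * exp (-r ^ 2 / (2 * t))` is bounded for `k ≤ 2`), so
`ρ_t` may be differentiated twice under the integral sign. This gives
`Δρ_t(x) = ∫ (‖x - √(1-t) x₀‖² / t² - d / t) heatKernel d t x x₀ dμ(x₀)`, and the identity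
follows from `Δ log ρ = Δρ / ρ - ‖∇ log ρ‖²`.
-/

lemma sq_mul_exp_neg_sq_div_le {t : ℝ} (ht : 0 < t) (r : ℝ) :
    r ^ 2 * exp (-r ^ 2 / (2 * t)) ≤ 2 * t := by
  calc r ^ 2 * exp (-r ^ 2 / (2 * t))
      = 2 * t * (r ^ 2 / (2 * t) * exp (-(r ^ 2 / (2 * t)))) := by
        rw [neg_div]; field_simp
    _ ≤ 2 * t * exp (-1) := by gcongr; exact mul_exp_neg_le_exp_neg_one _
    _ ≤ 2 * t := mul_le_of_le_one_right (by positivity) (exp_le_one_iff.mpr (by norm_num))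

lemma mul_exp_neg_sq_div_le {t : ℝ} (ht : 0 < t) (r : ℝ) :
    r * exp (-r ^ 2 / (2 * t)) ≤ 1 + 2 * t := by
  have hexp : exp (-r ^ 2 / (2 * t)) ≤ 1 := exp_le_one_iff.mpr (by
    rw [neg_div]; exact neg_nonpos.mpr (by positivity))
  calc r * exp (-r ^ 2 / (2 * t))
      ≤ (1 + r ^ 2) * exp (-r ^ 2 / (2 * t)) := by
        gcongr; nlinarith [sq_nonneg (r - 1)]
    _ = exp (-r ^ 2 / (2 * t)) + r ^ 2 * exp (-r ^ 2 / (2 * t)) := by ring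
    _ ≤ 1 + 2 * t := add_le_add hexp (sq_mul_exp_neg_sq_div_le ht r)

lemma hasFDerivAt_integral_of_norm_fderiv_le {α E G : Type*} [MeasurableSpace α]
    {μ : Measure α} [IsFiniteMeasure μ] [NormedAddCommGroup E] [NormedSpace ℝ E]
    [NormedAddCommGroup G] [NormedSpace ℝ G] {F : E → α → G} {F' : E → α → E →L[ℝ] G}
    {x : E} {C : ℝ} (hF_meas : ∀ y, AEStronglyMeasurable (F y) μ) (hF_int : Integrable (F x) μ)
    (hF'_meas : AEStronglyMeasurable (F' x) μ) (hF' : ∀ y a, HasFDerivAt (F · a) (F' y a) y)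
    (hF'_le : ∀ y a, ‖F' y a‖ ≤ C) :
    HasFDerivAt (fun y => ∫ a, F y a ∂μ) (∫ a, F' x a ∂μ) x :=
  hasFDerivAt_integral_of_dominated_of_fderiv_le univ_mem (.of_forall hF_meas) hF_int hF'_meas
    (.of_forall fun a y _ => hF'_le y a) (integrable_const C) (.of_forall fun a y _ => hF' y a)

lemma norm_sq_gradient_eq_sum {d : ℕ} (f : EuclideanSpace ℝ (Fin d) → ℝ)
    (x : EuclideanSpace ℝ (Fin d)) :
    ‖gradient f x‖ ^ 2 = ∑ i, fderiv ℝ f x (EuclideanSpace.single i 1) ^ 2 := by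
  rw [← (EuclideanSpace.basisFun (Fin d) ℝ).sum_sq_inner_left]
  simp [gradient, EuclideanSpace.basisFun_apply, InnerProductSpace.toDual_symm_apply]

section LogHessian

variable {E : Type*} [NormedAddCommGroup E] [NormedSpace ℝ E] {f : E → ℝ} {x : E}

lemma fderiv_log_apply (hf : DifferentiableAt ℝ f x) (hfx : f x ≠ 0) (v : E) :
    fderiv ℝ (fun y => log (f y)) x v = fderiv ℝ f x v / f x := by
  rw [(hf.hasFDerivAt.log hfx).fderiv, smul_apply, smul_eq_mul,
    inv_mul_eq_div]

lemma fderiv_fderiv_log_apply (hf : Differentiable ℝ f) (hf₀ : ∀ y, f y ≠ 0) {v : E}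
    (hfv : DifferentiableAt ℝ (fun y => fderiv ℝ f y v) x) (w : E) :
    fderiv ℝ (fun y => fderiv ℝ (fun z => log (f z)) y v) x w
      = fderiv ℝ (fun y => fderiv ℝ f y v) x w / f x
        - fderiv ℝ f x v * fderiv ℝ f x w / f x ^ 2 := by
  have hinv : HasFDerivAt (fun y => (f y)⁻¹) ((-(f x ^ 2)⁻¹) • fderiv ℝ f x) x :=
    (hasDerivAt_inv (hf₀ x)).comp_hasFDerivAt x (hf x).hasFDerivAt
  have hquot := hfv.hasFDerivAt.fun_mul hinv
  simp only [fderiv_log_apply (hf _) (hf₀ _), div_eq_mul_inv]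
  rw [hquot.fderiv]
  simp only [add_apply, smul_apply, smul_eq_mul]
  field_simp [hf₀ x]
  ring

end LogHessian

lemma traceHessian_log {d : ℕ} {f : EuclideanSpace ℝ (Fin d) → ℝ} {x : EuclideanSpace ℝ (Fin d)}
    (hf : Differentiable ℝ f) (hf₀ : ∀ y, f y ≠ 0)
    (hf' : ∀ i, DifferentiableAt ℝ (fun y => fderiv ℝ f y (EuclideanSpace.single i 1)) x) :
    traceHessian d (fun y => log (f y)) x
      = traceHessian d f x / f x - ‖gradient (fun y => log (f y)) x‖ ^ 2 := by
  simp only [traceHessian, norm_sq_gradient_eq_sum, fderiv_fderiv_log_apply hf hf₀ (hf' _),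
    fderiv_log_apply (hf x) (hf₀ x), Finset.sum_div, ← Finset.sum_sub_distrib]
  congr! 2 with i
  ring

section HeatKernel

variable {d : ℕ} {t : ℝ}

def heatKernelFDeriv (d : ℕ) (t : ℝ) (x x₀ : EuclideanSpace ℝ (Fin d)) :
    EuclideanSpace ℝ (Fin d) →L[ℝ] ℝ :=
  (-(heatKernel d t x x₀ / t)) • innerSL ℝ (x - √(1 - t) • x₀)

def heatKernelSecondFDeriv (d : ℕ) (t : ℝ) (x x₀ v : EuclideanSpace ℝ (Fin d)) :
    EuclideanSpace ℝ (Fin d) →L[ℝ] ℝ :=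
  heatKernel d t x x₀ •
    ((inner ℝ (x - √(1 - t) • x₀) v / t ^ 2) • innerSL ℝ (x - √(1 - t) • x₀) - t⁻¹ • innerSL ℝ v)

lemma heatKernel_pos (ht : 0 < t) (x x₀ : EuclideanSpace ℝ (Fin d)) :
    0 < heatKernel d t x x₀ := by
  unfold heatKernel; positivity

lemma heatKernel_le (ht : 0 < t) (x x₀ : EuclideanSpace ℝ (Fin d)) :
    heatKernel d t x x₀ ≤ (2 * π * t) ^ (-(d : ℝ) / 2) := by
  refine mul_le_of_le_one_right (by positivity) (exp_le_one_iff.mpr ?_)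
  rw [neg_div]; exact neg_nonpos.mpr (by positivity)

lemma norm_mul_heatKernel_le (ht : 0 < t) (x x₀ : EuclideanSpace ℝ (Fin d)) :
    ‖x - √(1 - t) • x₀‖ * heatKernel d t x x₀ ≤ (2 * π * t) ^ (-(d : ℝ) / 2) * (1 + 2 * t) := by
  rw [heatKernel, mul_left_comm]
  exact mul_le_mul_of_nonneg_left (mul_exp_neg_sq_div_le ht _) (by positivity)

lemma sq_norm_mul_heatKernel_le (ht : 0 < t) (x x₀ : EuclideanSpace ℝ (Fin d)) :
    ‖x - √(1 - t) • x₀‖ ^ 2 * heatKernel d t x x₀ ≤ (2 * π * t) ^ (-(d : ℝ) / 2) * (2 * t) := by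
  rw [heatKernel, mul_left_comm]
  exact mul_le_mul_of_nonneg_left (sq_mul_exp_neg_sq_div_le ht _) (by positivity)

@[fun_prop]
lemma continuous_heatKernel (x : EuclideanSpace ℝ (Fin d)) :
    Continuous (heatKernel d t x) := by
  unfold heatKernel; fun_prop

@[fun_prop]
lemma continuous_heatKernelFDeriv (x : EuclideanSpace ℝ (Fin d)) :
    Continuous (heatKernelFDeriv d t x) := by
  unfold heatKernelFDeriv; fun_prop

@[fun_prop]
lemma continuous_heatKernelSecondFDeriv (x v : EuclideanSpace ℝ (Fin d)) :
    Continuous (fun x₀ => heatKernelSecondFDeriv d t x x₀ v) := by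
  unfold heatKernelSecondFDeriv; fun_prop

lemma hasFDerivAt_heatKernel (x₀ x : EuclideanSpace ℝ (Fin d)) :
    HasFDerivAt (heatKernel d t · x₀) (heatKernelFDeriv d t x x₀) x := by
  have h := ((((hasFDerivAt_id x).sub_const (√(1 - t) • x₀)).norm_sq.const_mul
    (-(2 * t)⁻¹)).exp.const_mul ((2 * π * t) ^ (-(d : ℝ) / 2)))
  refine (h.congr_fderiv ?_).congr_of_eventuallyEq (.of_forall fun y => by
    simp only [heatKernel, id]; ring_nf)
  ext w
  simp only [heatKernelFDeriv, heatKernel, smul_apply, ContinuousLinearMap.comp_id, id,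
    innerSL_apply_apply, smul_eq_mul, nsmul_eq_mul]
  ring_nf

lemma heatKernelFDeriv_apply (x x₀ v : EuclideanSpace ℝ (Fin d)) :
    heatKernelFDeriv d t x x₀ v
      = -(heatKernel d t x x₀ / t) * inner ℝ (x - √(1 - t) • x₀) v := rfl

lemma hasFDerivAt_heatKernelFDeriv_apply (ht : 0 < t) (x₀ v x : EuclideanSpace ℝ (Fin d)) :
    HasFDerivAt (heatKernelFDeriv d t · x₀ v) (heatKernelSecondFDeriv d t x x₀ v) x := by
  have hinner : HasFDerivAt (fun y => inner ℝ (y - √(1 - t) • x₀) v) (innerSL ℝ v) x := by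
    have h := (innerSL ℝ v).hasFDerivAt.comp x ((hasFDerivAt_id x).sub_const (√(1 - t) • x₀))
    rw [ContinuousLinearMap.comp_id] at h
    exact h.congr_of_eventuallyEq (.of_forall fun y => by simp [real_inner_comm])
  have h := ((hasFDerivAt_heatKernel (t := t) x₀ x).const_mul (-t⁻¹)).fun_mul hinner
  refine (h.congr_fderiv ?_).congr_of_eventuallyEq
    (.of_forall fun y => by simp only [heatKernelFDeriv_apply]; ring)
  ext w
  simp only [heatKernelSecondFDeriv, heatKernelFDeriv_apply, add_apply, smul_apply, sub_apply,
    innerSL_apply_apply, smul_eq_mul]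
  field_simp
  ring

lemma norm_heatKernelFDeriv_le (ht : 0 < t) (x x₀ : EuclideanSpace ℝ (Fin d)) :
    ‖heatKernelFDeriv d t x x₀‖ ≤ (2 * π * t) ^ (-(d : ℝ) / 2) * (1 + 2 * t) / t := by
  have hk := (heatKernel_pos ht x x₀).le
  rw [heatKernelFDeriv, norm_smul, innerSL_apply_norm, norm_neg, Real.norm_of_nonneg (by positivity),
    div_mul_eq_mul_div, mul_comm, le_div_iff₀ ht, div_mul_cancel₀ _ ht.ne']
  exact norm_mul_heatKernel_le ht x x₀

lemma norm_heatKernelSecondFDeriv_le (ht : 0 < t) (x x₀ v : EuclideanSpace ℝ (Fin d)) :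
    ‖heatKernelSecondFDeriv d t x x₀ v‖ ≤ (2 * π * t) ^ (-(d : ℝ) / 2) * (3 * ‖v‖ / t) := by
  set u := x - √(1 - t) • x₀
  set k := heatKernel d t x x₀
  set C := (2 * π * t) ^ (-(d : ℝ) / 2)
  have hk : 0 ≤ k := (heatKernel_pos ht x x₀).le
  have hku : ‖u‖ ^ 2 * k ≤ C * (2 * t) := sq_norm_mul_heatKernel_le ht x x₀
  have hkC : k ≤ C := heatKernel_le ht x x₀
  have hinner : |inner ℝ u v| ≤ ‖u‖ * ‖v‖ := abs_real_inner_le_norm u v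
  calc ‖heatKernelSecondFDeriv d t x x₀ v‖
      ≤ k * (|inner ℝ u v| / t ^ 2 * ‖u‖ + t⁻¹ * ‖v‖) := by
        rw [heatKernelSecondFDeriv, norm_smul, Real.norm_of_nonneg hk]
        refine mul_le_mul_of_nonneg_left ((norm_sub_le _ _).trans_eq ?_) hk
        rw [norm_smul, norm_smul, innerSL_apply_norm, innerSL_apply_norm, Real.norm_eq_abs,
          abs_div, abs_of_pos (by positivity : 0 < t ^ 2), Real.norm_of_nonneg (by positivity)]
    _ ≤ (‖u‖ ^ 2 * k) * ‖v‖ / t ^ 2 + k * ‖v‖ / t := by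
        have := mul_le_mul_of_nonneg_right hinner (norm_nonneg u)
        rw [div_mul_eq_mul_div, mul_add, inv_mul_eq_div]
        gcongr ?_ + ?_
        · rw [mul_div_assoc', div_le_div_iff_of_pos_right (by positivity)]
          nlinarith
        · rw [mul_div_assoc']
    _ ≤ (C * (2 * t)) * ‖v‖ / t ^ 2 + C * ‖v‖ / t := by gcongr
    _ = C * (3 * ‖v‖ / t) := by field_simp; ring

end HeatKernel

section Rho

variable {d : ℕ} {t : ℝ} (μ : Measure (EuclideanSpace ℝ (Fin d)))

lemma integrable_heatKernel (ht : 0 < t) [IsFiniteMeasure μ] (x : EuclideanSpace ℝ (Fin d)) :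
    Integrable (heatKernel d t x) μ :=
  .of_bound (continuous_heatKernel x).aestronglyMeasurable _ (.of_forall fun a => by
    rw [Real.norm_of_nonneg (heatKernel_pos ht x a).le]; exact heatKernel_le ht x a)

lemma integrable_heatKernelFDeriv (ht : 0 < t) [IsFiniteMeasure μ] (x : EuclideanSpace ℝ (Fin d)) :
    Integrable (heatKernelFDeriv d t x) μ :=
  .of_bound (continuous_heatKernelFDeriv x).aestronglyMeasurable _
    (.of_forall (norm_heatKernelFDeriv_le ht x))

lemma integrable_heatKernelSecondFDeriv (ht : 0 < t) [IsFiniteMeasure μ]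
    (x v : EuclideanSpace ℝ (Fin d)) :
    Integrable (fun x₀ => heatKernelSecondFDeriv d t x x₀ v) μ :=
  .of_bound (continuous_heatKernelSecondFDeriv x v).aestronglyMeasurable _
    (.of_forall fun x₀ => norm_heatKernelSecondFDeriv_le ht x x₀ v)

lemma integrable_sq_norm_mul_heatKernel (ht : 0 < t) [IsFiniteMeasure μ]
    (x : EuclideanSpace ℝ (Fin d)) :
    Integrable (fun x₀ => ‖x - √(1 - t) • x₀‖ ^ 2 * heatKernel d t x x₀) μ :=
  .of_bound (by fun_prop) _ (.of_forall fun a => by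
    rw [Real.norm_of_nonneg (by have := heatKernel_pos ht x a; positivity)]
    exact sq_norm_mul_heatKernel_le ht x a)

lemma rho_pos_s6 (ht : 0 < t) [IsFiniteMeasure μ] [NeZero μ] (x : EuclideanSpace ℝ (Fin d)) :
    0 < rho d μ t x := by
  rw [rho, integral_pos_iff_support_of_nonneg (fun a => (heatKernel_pos ht x a).le)
    (integrable_heatKernel μ ht x), Function.support_eq_univ fun a => (heatKernel_pos ht x a).ne']
  exact Measure.measure_univ_pos.mpr (NeZero.ne μ)

lemma hasFDerivAt_rho (ht : 0 < t) [IsFiniteMeasure μ] (x : EuclideanSpace ℝ (Fin d)) :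
    HasFDerivAt (rho d μ t) (∫ x₀, heatKernelFDeriv d t x x₀ ∂μ) x :=
  hasFDerivAt_integral_of_norm_fderiv_le
    (fun y => (continuous_heatKernel y).aestronglyMeasurable) (integrable_heatKernel μ ht x)
    (continuous_heatKernelFDeriv x).aestronglyMeasurable (fun y x₀ => hasFDerivAt_heatKernel x₀ y)
    (fun y x₀ => norm_heatKernelFDeriv_le ht y x₀)

lemma fderiv_rho_apply (ht : 0 < t) [IsFiniteMeasure μ] (x v : EuclideanSpace ℝ (Fin d)) :
    fderiv ℝ (rho d μ t) x v = ∫ x₀, heatKernelFDeriv d t x x₀ v ∂μ := by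
  rw [(hasFDerivAt_rho μ ht x).fderiv,
    ContinuousLinearMap.integral_apply (integrable_heatKernelFDeriv μ ht x)]

lemma hasFDerivAt_fderiv_rho_apply (ht : 0 < t) [IsFiniteMeasure μ]
    (x v : EuclideanSpace ℝ (Fin d)) :
    HasFDerivAt (fun y => fderiv ℝ (rho d μ t) y v)
      (∫ x₀, heatKernelSecondFDeriv d t x x₀ v ∂μ) x := by
  simp only [fderiv_rho_apply μ ht]
  exact hasFDerivAt_integral_of_norm_fderiv_le
    (fun y => ((continuous_heatKernelFDeriv y).clm_apply continuous_const).aestronglyMeasurable)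
    ((integrable_heatKernelFDeriv μ ht x).apply_continuousLinearMap v)
    (continuous_heatKernelSecondFDeriv x v).aestronglyMeasurable
    (fun y x₀ => hasFDerivAt_heatKernelFDeriv_apply ht x₀ v y)
    (fun y x₀ => norm_heatKernelSecondFDeriv_le ht y x₀ v)

lemma sum_heatKernelSecondFDeriv_single (x x₀ : EuclideanSpace ℝ (Fin d)) :
    ∑ i, heatKernelSecondFDeriv d t x x₀ (EuclideanSpace.single i 1) (EuclideanSpace.single i 1)
      = ‖x - √(1 - t) • x₀‖ ^ 2 * heatKernel d t x x₀ / t ^ 2 - d / t * heatKernel d t x x₀ := by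
  set u := x - √(1 - t) • x₀
  set k := heatKernel d t x x₀
  have hsq := (EuclideanSpace.basisFun (Fin d) ℝ).sum_sq_inner_left u
  simp only [EuclideanSpace.basisFun_apply] at hsq
  calc ∑ i, heatKernelSecondFDeriv d t x x₀ (EuclideanSpace.single i 1) (EuclideanSpace.single i 1)
      = ∑ i : Fin d, (k / t ^ 2 * inner ℝ u (EuclideanSpace.single i 1) ^ 2 - k / t) := by
        refine Finset.sum_congr rfl fun i _ => ?_
        simp only [heatKernelSecondFDeriv, smul_apply, sub_apply, innerSL_apply_apply, smul_eq_mul,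
          real_inner_self_eq_norm_sq, PiLp.norm_single, norm_one]
        ring
    _ = ‖u‖ ^ 2 * k / t ^ 2 - d / t * k := by
        rw [Finset.sum_sub_distrib, ← Finset.mul_sum, hsq, Finset.sum_const, Finset.card_univ,
          Fintype.card_fin, nsmul_eq_mul]
        ring

lemma traceHessian_rho (ht : 0 < t) [IsFiniteMeasure μ] (x : EuclideanSpace ℝ (Fin d)) :
    traceHessian d (rho d μ t) x
      = (∫ x₀, ‖x - √(1 - t) • x₀‖ ^ 2 * heatKernel d t x x₀ ∂μ) / t ^ 2 - d / t * rho d μ t x := by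
  simp only [traceHessian, (hasFDerivAt_fderiv_rho_apply μ ht x _).fderiv,
    ContinuousLinearMap.integral_apply (integrable_heatKernelSecondFDeriv μ ht x _)]
  rw [← integral_finsetSum _ fun i _ =>
    (integrable_heatKernelSecondFDeriv μ ht x _).apply_continuousLinearMap _]
  simp only [sum_heatKernelSecondFDeriv_single]
  rw [integral_sub ((integrable_sq_norm_mul_heatKernel μ ht x).div_const _)
    ((integrable_heatKernel μ ht x).const_mul _), integral_div, integral_const_mul, rho]

end Rho

theorem trace_hessian_log_density_identity_general
    (d : ℕ) (μ : Measure (EuclideanSpace ℝ (Fin d))) [IsProbabilityMeasure μ]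
    (t : ℝ) (ht₀ : 0 < t) (x : EuclideanSpace ℝ (Fin d)) :
    traceHessian d (fun y => Real.log (rho d μ t y)) x
      = -(d / t) - ‖gradient (fun y => Real.log (rho d μ t y)) x‖ ^ 2
        + (1 / t ^ 2) *
          ∫ x₀, ‖x - Real.sqrt (1 - t) • x₀‖ ^ 2 *
            (heatKernel d t x x₀ / rho d μ t x) ∂μ := by
  have hρ : ∀ y, rho d μ t y ≠ 0 := fun y => (rho_pos_s6 μ ht₀ y).ne'
  rw [traceHessian_log (fun y => (hasFDerivAt_rho μ ht₀ y).differentiableAt) hρ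
      (fun i => (hasFDerivAt_fderiv_rho_apply μ ht₀ x _).differentiableAt),
    traceHessian_rho μ ht₀]
  simp_rw [← mul_div_assoc]
  rw [integral_div]
  field_simp [hρ x]
  ring

/-- **Claim 2 (identity).** For every `t ∈ (0,1)` and `x ∈ ℝ^d`,
`tr(∇² log ρ_t(x)) = −d/t − ‖∇log ρ_t(x)‖² + (1/t²) ∫ ‖x − √(1−t)x₀‖² p_{X₀|X_t}(dx₀ | x)`,
where the conditional law of `X₀` given `X_t = x` has density
`heatKernel d t x x₀ / ρ_t(x)` with respect to the law `μ` of `X₀`. -/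
theorem trace_hessian_log_density_identity
    (d : ℕ) (hd : 1 ≤ d) (μ : Measure (EuclideanSpace ℝ (Fin d))) [IsProbabilityMeasure μ]
    (t : ℝ) (ht₀ : 0 < t) (ht₁ : t < 1) (x : EuclideanSpace ℝ (Fin d)) :
    traceHessian d (fun y => Real.log (rho d μ t y)) x
      = -(d / t) - ‖gradient (fun y => Real.log (rho d μ t y)) x‖ ^ 2
        + (1 / t ^ 2) *
          ∫ x₀, ‖x - Real.sqrt (1 - t) • x₀‖ ^ 2 *
            (heatKernel d t x x₀ / rho d μ t x) ∂μ :=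
  trace_hessian_log_density_identity_general d μ t ht₀ x
end
end

section
/- Suppose X₀ has a smooth density ρ₀ with L := sup_x ‖∇² log ρ₀(x)‖ < ∞. Then for every t ∈ (0,1) and all x, x₀ ∈ ℝ^d, the conditional density p_{X₀|X_t}(x₀ | x) satisfies −∇²_{x₀} log p_{X₀|X_t}(x₀ | x) ⪰ ((1−t)/t − L) I_d; in particular, if t ≤ 1/(2(L+1)) then −∇²_{x₀} log p_{X₀|X_t}(x₀ | x) ⪰ (1/(2t)) I_d, i.e., the conditional distribution of X₀ given X_t = x is 1/(2t)-strongly log-concave. -/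
open MeasureTheory Real Filter
open scoped ENNReal
open scoped RealInnerProductSpace

noncomputable section

/-- Hessian matrix of `f : ℝ^d → ℝ` at `x`: entry `(i, j)` is `∂²f/∂xᵢ∂xⱼ (x)`. -/
def hessMatrix (d : ℕ) (f : EuclideanSpace ℝ (Fin d) → ℝ)
    (x : EuclideanSpace ℝ (Fin d)) : Matrix (Fin d) (Fin d) ℝ :=
  fun i j =>
    fderiv ℝ (fun y => fderiv ℝ f y (EuclideanSpace.single j 1)) x (EuclideanSpace.single i 1)


lemma aux_grad_fderiv (d : ℕ) (g : EuclideanSpace ℝ (Fin d) → ℝ) (hg : ContDiff ℝ (⊤ : ℕ∞) g)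
    (x₀ v w : EuclideanSpace ℝ (Fin d)) :
    ⟪fderiv ℝ (gradient g) x₀ v, w⟫ = fderiv ℝ (fderiv ℝ g) x₀ v w := by
  have hfd : ContDiff ℝ (⊤ : ℕ∞) (fderiv ℝ g) := hg.fderiv_right (by norm_cast)
  have hH : HasFDerivAt (fderiv ℝ g) (fderiv ℝ (fderiv ℝ g) x₀) x₀ :=
    (hfd.differentiable (by simp)).differentiableAt.hasFDerivAt
  have hG : HasFDerivAt (gradient g)
      (((InnerProductSpace.toDual ℝ
          (EuclideanSpace ℝ (Fin d))).symm.toContinuousLinearEquiv.toContinuousLinearMap).comp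
        (fderiv ℝ (fderiv ℝ g) x₀)) x₀ :=
    ((InnerProductSpace.toDual ℝ
      (EuclideanSpace ℝ (Fin d))).symm.toContinuousLinearEquiv.toContinuousLinearMap
        ).hasFDerivAt.comp x₀ hH
  rw [hG.fderiv]
  simp only [ContinuousLinearMap.comp_apply, LinearIsometryEquiv.coe_toContinuousLinearEquiv,
    ContinuousLinearEquiv.coe_coe]
  exact InnerProductSpace.toDual_symm_apply

lemma aux_symm (d : ℕ) (g : EuclideanSpace ℝ (Fin d) → ℝ) (hg : ContDiff ℝ (⊤ : ℕ∞) g)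
    (x₀ v w : EuclideanSpace ℝ (Fin d)) :
    ⟪fderiv ℝ (gradient g) x₀ v, w⟫ = ⟪fderiv ℝ (gradient g) x₀ w, v⟫ := by
  rw [aux_grad_fderiv d g hg x₀ v w, aux_grad_fderiv d g hg x₀ w v]
  exact (hg.contDiffAt.isSymmSndFDerivAt (by simp; exact WithTop.coe_le_coe.mpr le_top)) v w


lemma euclid_sum_apply (d : ℕ) (f : Fin d → EuclideanSpace ℝ (Fin d)) (j : Fin d) :
    (∑ i, f i) j = ∑ i, f i j := by simp [WithLp.ofLp_sum]

lemma aux_psd (d : ℕ) (M : EuclideanSpace ℝ (Fin d) →L[ℝ] EuclideanSpace ℝ (Fin d))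
    (c : ℝ) (hc : ‖M‖ ≤ c)
    (hsym : ∀ i j : Fin d, ⟪M (EuclideanSpace.single i 1), EuclideanSpace.single j 1⟫
      = ⟪M (EuclideanSpace.single j 1), EuclideanSpace.single i 1⟫)
    (A : Matrix (Fin d) (Fin d) ℝ)
    (hA : ∀ i j, A i j = (if i = j then c else 0)
      - ⟪M (EuclideanSpace.single i 1), EuclideanSpace.single j 1⟫) :
    A.PosSemidef := by
  have hinner : ∀ i j : Fin d, ⟪M (EuclideanSpace.single i 1), EuclideanSpace.single j 1⟫
      = M (EuclideanSpace.single i 1) j := by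
    intro i j
    rw [real_inner_comm, EuclideanSpace.inner_single_left]
    simp
  refine Matrix.posSemidef_iff_dotProduct_mulVec.mpr ⟨?_, ?_⟩
  · ext i j
    simp only [Matrix.conjTranspose_apply, hA, star_trivial]
    rw [hsym j i]
    by_cases h : i = j
    · simp [h]
    · simp [h, Ne.symm h]
  · intro v
    set u : EuclideanSpace ℝ (Fin d) := (WithLp.equiv 2 (Fin d → ℝ)).symm v with hudef
    have hu : ∀ i, u i = v i := fun i => rfl
    have husum : u = ∑ i, v i • EuclideanSpace.single i (1:ℝ) := by
      ext j
      rw [euclid_sum_apply]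
      simp [EuclideanSpace.single_apply, hu j]
    have hMu : ∀ j, M u j = ∑ i, v i * M (EuclideanSpace.single i 1) j := by
      intro j
      conv_lhs => rw [husum]
      rw [map_sum, euclid_sum_apply]
      simp
    have hinnuu : ⟪u, u⟫ = ∑ i, v i * v i := by
      rw [PiLp.inner_apply]; simp [RCLike.inner_apply, hu, sq]
    have hinnMu : ⟪M u, u⟫ = ∑ i, v i * ∑ j, M (EuclideanSpace.single i 1) j * v j := by
      calc ⟪M u, u⟫ = ∑ j, M u j * v j := by
            rw [PiLp.inner_apply]
            simp [RCLike.inner_apply, hu, mul_comm]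
        _ = ∑ j, ∑ i, v i * M (EuclideanSpace.single i 1) j * v j := by
            refine Finset.sum_congr rfl fun j _ => ?_
            rw [hMu j, Finset.sum_mul]
        _ = ∑ i, ∑ j, v i * M (EuclideanSpace.single i 1) j * v j := Finset.sum_comm
        _ = ∑ i, v i * ∑ j, M (EuclideanSpace.single i 1) j * v j := by
            refine Finset.sum_congr rfl fun i _ => ?_
            rw [Finset.mul_sum]
            refine Finset.sum_congr rfl fun j _ => by ring
    have hq : dotProduct (star v) (A.mulVec v) = c * ⟪u, u⟫ - ⟪M u, u⟫ := by
      rw [hinnuu, hinnMu]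
      calc dotProduct (star v) (A.mulVec v)
          = ∑ i, v i * ∑ j, A i j * v j := by
            simp [dotProduct, Matrix.mulVec]
        _ = ∑ i, (c * (v i * v i) - v i * ∑ j, M (EuclideanSpace.single i 1) j * v j) := by
            refine Finset.sum_congr rfl fun i _ => ?_
            have : ∑ j, A i j * v j
                = c * v i - ∑ j, M (EuclideanSpace.single i 1) j * v j := by
              simp only [hA, hinner, sub_mul, Finset.sum_sub_distrib]
              congr 1
              simp [ite_mul]
            rw [this]; ring
        _ = c * (∑ i, v i * v i) - ∑ i, v i * ∑ j, M (EuclideanSpace.single i 1) j * v j := by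
            rw [Finset.sum_sub_distrib, Finset.mul_sum]
    rw [hq]
    have h2 : ⟪M u, u⟫ ≤ ‖M u‖ * ‖u‖ := real_inner_le_norm _ _
    have h3 : ‖M u‖ ≤ c * ‖u‖ := le_trans (M.le_opNorm u)
      (mul_le_mul_of_nonneg_right hc (norm_nonneg u))
    have h4 : ⟪u, u⟫ = ‖u‖ * ‖u‖ := real_inner_self_eq_norm_mul_norm u
    have h5 : ⟪M u, u⟫ ≤ c * ⟪u, u⟫ := by
      rw [h4]
      calc ⟪M u, u⟫ ≤ ‖M u‖ * ‖u‖ := h2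
        _ ≤ (c * ‖u‖) * ‖u‖ := mul_le_mul_of_nonneg_right h3 (norm_nonneg u)
        _ = c * (‖u‖ * ‖u‖) := by ring
    linarith

lemma aux_hess (d : ℕ) (g : EuclideanSpace ℝ (Fin d) → ℝ) (hg : ContDiff ℝ (⊤ : ℕ∞) g)
    (a b C : ℝ) (x x₀ : EuclideanSpace ℝ (Fin d)) (i j : Fin d) :
    hessMatrix d (fun z => g z + a * ⟪z, z⟫ + b * ⟪x, z⟫ + C) x₀ i j
      = ⟪fderiv ℝ (gradient g) x₀ (EuclideanSpace.single i 1), EuclideanSpace.single j 1⟫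
        + 2 * a * (if i = j then 1 else 0) := by
  set ei : EuclideanSpace ℝ (Fin d) := EuclideanSpace.single i 1 with hei
  set ej : EuclideanSpace ℝ (Fin d) := EuclideanSpace.single j 1 with hej
  have hgd : Differentiable ℝ g := hg.differentiable (by simp)
  -- Step A : first derivative
  have stepA : ∀ y : EuclideanSpace ℝ (Fin d),
      fderiv ℝ (fun z => g z + a * ⟪z, z⟫ + b * ⟪x, z⟫ + C) y ej
        = ⟪gradient g y, ej⟫ + (2 * a) * ⟪ej, y⟫ + b * ⟪x, ej⟫ := by
    intro y
    have h1 : HasFDerivAt g (fderiv ℝ g y) y := (hgd y).hasFDerivAt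
    have h2 : HasFDerivAt (fun z : EuclideanSpace ℝ (Fin d) => ⟪z, z⟫)
        ((fderivInnerCLM ℝ (y, y)).comp
          ((ContinuousLinearMap.id ℝ (EuclideanSpace ℝ (Fin d))).prod
            (ContinuousLinearMap.id ℝ (EuclideanSpace ℝ (Fin d))))) y :=
      (hasFDerivAt_id y).inner ℝ (hasFDerivAt_id y)
    have h3 : HasFDerivAt (fun z : EuclideanSpace ℝ (Fin d) => ⟪x, z⟫)
        (innerSL ℝ x) y := (innerSL ℝ x).hasFDerivAt
    have hF : HasFDerivAt (fun z => g z + a * ⟪z, z⟫ + b * ⟪x, z⟫ + C)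
        (fderiv ℝ g y
          + a • ((fderivInnerCLM ℝ (y, y)).comp
            ((ContinuousLinearMap.id ℝ (EuclideanSpace ℝ (Fin d))).prod
              (ContinuousLinearMap.id ℝ (EuclideanSpace ℝ (Fin d)))))
          + b • innerSL ℝ x) y :=
      ((h1.add (h2.const_mul a)).add (h3.const_mul b)).add_const C
    rw [hF.fderiv]
    have hgrad : fderiv ℝ g y ej = ⟪gradient g y, ej⟫ :=
      (InnerProductSpace.toDual_symm_apply).symm
    simp only [ContinuousLinearMap.add_apply, ContinuousLinearMap.smul_apply,
      ContinuousLinearMap.comp_apply, ContinuousLinearMap.prod_apply,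
      ContinuousLinearMap.coe_id', id_eq, fderivInnerCLM_apply, innerSL_apply_apply, smul_eq_mul,
      hgrad]
    rw [real_inner_comm y ej]
    ring
  -- Step B : rewrite and differentiate again
  have hrw : (fun y => fderiv ℝ (fun z => g z + a * ⟪z, z⟫ + b * ⟪x, z⟫ + C) y ej)
      = fun y => ⟪gradient g y, ej⟫ + (2 * a) * ⟪ej, y⟫ + b * ⟪x, ej⟫ := funext stepA
  have hfd : ContDiff ℝ (⊤ : ℕ∞) (fderiv ℝ g) := hg.fderiv_right (by norm_cast)
  have hG : HasFDerivAt (gradient g) (fderiv ℝ (gradient g) x₀) x₀ := by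
    have hT : Differentiable ℝ (InnerProductSpace.toDual ℝ
        (EuclideanSpace ℝ (Fin d))).symm.toContinuousLinearEquiv.toContinuousLinearMap :=
      ContinuousLinearMap.differentiable _
    exact ((hT.comp (hfd.differentiable (by simp))) x₀).hasFDerivAt
  have hψ1 : HasFDerivAt (fun y => ⟪gradient g y, ej⟫)
      ((fderivInnerCLM ℝ (gradient g x₀, ej)).comp
        ((fderiv ℝ (gradient g) x₀).prod (0 : EuclideanSpace ℝ (Fin d) →L[ℝ]
          EuclideanSpace ℝ (Fin d)))) x₀ :=
    hG.inner ℝ (hasFDerivAt_const ej x₀)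
  have hψ2 : HasFDerivAt (fun y : EuclideanSpace ℝ (Fin d) => (2 * a) * ⟪ej, y⟫)
      ((2 * a) • innerSL ℝ ej) x₀ := (innerSL ℝ ej).hasFDerivAt.const_mul (2 * a)
  have hψ : HasFDerivAt (fun y => ⟪gradient g y, ej⟫ + (2 * a) * ⟪ej, y⟫ + b * ⟪x, ej⟫)
      ((fderivInnerCLM ℝ (gradient g x₀, ej)).comp
        ((fderiv ℝ (gradient g) x₀).prod 0) + (2 * a) • innerSL ℝ ej) x₀ :=
    (hψ1.add hψ2).add_const _
  rw [hessMatrix, hrw, hψ.fderiv]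
  simp only [ContinuousLinearMap.add_apply, ContinuousLinearMap.smul_apply,
    ContinuousLinearMap.comp_apply, ContinuousLinearMap.prod_apply, fderivInnerCLM_apply,
    ContinuousLinearMap.zero_apply, inner_zero_right, innerSL_apply_apply, smul_eq_mul, add_zero]
  have : ⟪ej, ei⟫ = (if i = j then (1:ℝ) else 0) := by
    rw [hej, hei, EuclideanSpace.inner_single_left]
    simp [EuclideanSpace.single_apply, eq_comm]
  rw [this, zero_add, hei]

/-- **Strong log-concavity of the conditional law.** If `X₀` has a smooth density `ρ₀` with
`L := sup_x ‖∇² log ρ₀(x)‖ < ∞`, then for every `t ∈ (0,1)` and all `x, x₀ ∈ ℝ^d` the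
conditional density `p_{X₀|X_t}(x₀ | x) = ρ₀(x₀) · heatKernel d t x x₀ / ρ_t(x)` satisfies
`−∇²_{x₀} log p_{X₀|X_t}(x₀ | x) ⪰ ((1−t)/t − L) I_d`; in particular if `t ≤ 1/(2(L+1))` then
`−∇²_{x₀} log p_{X₀|X_t}(x₀ | x) ⪰ (1/(2t)) I_d`. -/
theorem conditional_law_strongly_log_concave
    (d : ℕ) (hd : 1 ≤ d) (μ : Measure (EuclideanSpace ℝ (Fin d))) [IsProbabilityMeasure μ]
    (ρ₀ : EuclideanSpace ℝ (Fin d) → ℝ)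
    (hdensity : μ = volume.withDensity (fun x => ENNReal.ofReal (ρ₀ x)))
    (hpos : ∀ x, 0 < ρ₀ x) (hsmooth : ContDiff ℝ (⊤ : ℕ∞) ρ₀)
    (L : ℝ) (hL : ∀ x, ‖fderiv ℝ (gradient (fun y => Real.log (ρ₀ y))) x‖ ≤ L)
    (t : ℝ) (ht₀ : 0 < t) (ht₁ : t < 1) (x x₀ : EuclideanSpace ℝ (Fin d)) :
    (-(hessMatrix d (fun z => Real.log (ρ₀ z * heatKernel d t x z / rho d μ t x)) x₀)
        - ((1 - t) / t - L) • (1 : Matrix (Fin d) (Fin d) ℝ)).PosSemidef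
    ∧ (t ≤ 1 / (2 * (L + 1)) →
        (-(hessMatrix d (fun z => Real.log (ρ₀ z * heatKernel d t x z / rho d μ t x)) x₀)
          - (1 / (2 * t)) • (1 : Matrix (Fin d) (Fin d) ℝ)).PosSemidef) := by

  classical
  set g : EuclideanSpace ℝ (Fin d) → ℝ := fun y => Real.log (ρ₀ y) with hgdef
  have hg : ContDiff ℝ (⊤ : ℕ∞) g :=
    ContDiff.log (hsmooth.of_le (by simp)) (fun z => (hpos z).ne')
  set M : EuclideanSpace ℝ (Fin d) →L[ℝ] EuclideanSpace ℝ (Fin d) :=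
    fderiv ℝ (gradient g) x₀ with hMdef
  have hMLe : ‖M‖ ≤ L := hL x₀
  have hL0 : 0 ≤ L := le_trans (norm_nonneg _) hMLe
  have hsym : ∀ i j : Fin d, ⟪M (EuclideanSpace.single i 1), EuclideanSpace.single j 1⟫
      = ⟪M (EuclideanSpace.single j 1), EuclideanSpace.single i 1⟫ :=
    fun i j => aux_symm d g hg x₀ _ _
  -- positivity of rho
  have hc : (0:ℝ) < (2 * π * t) ^ (-(d : ℝ) / 2) :=
    Real.rpow_pos_of_pos (by positivity) _
  have hheat : ∀ z, 0 < heatKernel d t x z := fun z => mul_pos hc (Real.exp_pos _)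
  have hcont : Continuous (fun z => heatKernel d t x z) := by
    unfold heatKernel
    fun_prop
  have hint : Integrable (fun z => heatKernel d t x z) μ := by
    refine Integrable.mono' (integrable_const ((2 * π * t) ^ (-(d : ℝ) / 2)))
      hcont.aestronglyMeasurable ?_
    filter_upwards with z
    rw [Real.norm_eq_abs, abs_of_pos (hheat z)]
    unfold heatKernel
    have he : Real.exp (-‖x - Real.sqrt (1 - t) • z‖ ^ 2 / (2 * t)) ≤ 1 := by
      rw [Real.exp_le_one_iff]
      have h0 : (0:ℝ) ≤ ‖x - Real.sqrt (1 - t) • z‖ ^ 2 := by positivity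
      have h2t : (0:ℝ) < 2 * t := by linarith
      exact div_nonpos_of_nonpos_of_nonneg (by linarith) h2t.le
    calc (2 * π * t) ^ (-(d : ℝ) / 2) * Real.exp (-‖x - Real.sqrt (1 - t) • z‖ ^ 2 / (2 * t))
        ≤ (2 * π * t) ^ (-(d : ℝ) / 2) * 1 := mul_le_mul_of_nonneg_left he hc.le
      _ = (2 * π * t) ^ (-(d : ℝ) / 2) := mul_one _
  have hR : 0 < rho d μ t x := by
    rw [rho, integral_pos_iff_support_of_nonneg (fun z => (hheat z).le) hint]
    have hs : Function.support (fun z => heatKernel d t x z) = Set.univ :=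
      Set.eq_univ_of_forall fun z => (hheat z).ne'
    rw [hs]
    simp
  -- rewrite of the log density
  have h1t : (0:ℝ) ≤ 1 - t := by linarith
  have hfun : (fun z => Real.log (ρ₀ z * heatKernel d t x z / rho d μ t x))
      = fun z => g z + (-(1 - t) / (2 * t)) * ⟪z, z⟫ + (Real.sqrt (1 - t) / t) * ⟪x, z⟫
          + (Real.log ((2 * π * t) ^ (-(d : ℝ) / 2)) - ‖x‖ ^ 2 / (2 * t)
            - Real.log (rho d μ t x)) := by
    funext z
    rw [Real.log_div (mul_pos (hpos z) (hheat z)).ne' hR.ne',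
      Real.log_mul (hpos z).ne' (hheat z).ne']
    unfold heatKernel
    rw [Real.log_mul hc.ne' (Real.exp_pos _).ne', Real.log_exp]
    have hnorm : ‖x - Real.sqrt (1 - t) • z‖ ^ 2
        = ‖x‖ ^ 2 - 2 * (Real.sqrt (1 - t) * ⟪x, z⟫) + (1 - t) * ⟪z, z⟫ := by
      rw [norm_sub_sq_real, real_inner_smul_right, norm_smul, mul_pow]
      rw [real_inner_self_eq_norm_sq z]
      congr 2
      rw [Real.norm_eq_abs, sq_abs, Real.sq_sqrt h1t]
    rw [hnorm, hgdef]
    have ht : t ≠ 0 := ht₀.ne'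
    field_simp
    ring
  rw [hfun]
  have hhessEq : ∀ i j : Fin d,
      hessMatrix d (fun z => g z + (-(1 - t) / (2 * t)) * ⟪z, z⟫
          + (Real.sqrt (1 - t) / t) * ⟪x, z⟫
          + (Real.log ((2 * π * t) ^ (-(d : ℝ) / 2)) - ‖x‖ ^ 2 / (2 * t)
            - Real.log (rho d μ t x))) x₀ i j
        = ⟪M (EuclideanSpace.single i 1), EuclideanSpace.single j 1⟫
          + 2 * (-(1 - t) / (2 * t)) * (if i = j then 1 else 0) :=
    fun i j => aux_hess d g hg (-(1 - t) / (2 * t)) (Real.sqrt (1 - t) / t) _ x x₀ i j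
  have ht : t ≠ 0 := ht₀.ne'
  constructor
  · refine aux_psd d M L hMLe hsym _ (fun i j => ?_)
    simp only [Matrix.sub_apply, Matrix.neg_apply, Matrix.smul_apply, Matrix.one_apply,
      smul_eq_mul, hhessEq]
    by_cases h : i = j
    · simp only [h, if_true]
      field_simp
      ring
    · simp only [h, if_false]
      ring
  · intro ht2
    have hLc : L ≤ (1 - t) / t - 1 / (2 * t) := by
      have h2 : t * (2 * (L + 1)) ≤ 1 := by
        rw [← le_div_iff₀ (by positivity)]
        exact ht2
      have heq : (1 - t) / t - 1 / (2 * t) = (1 - 2 * t) / (2 * t) := by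
        field_simp
        ring
      rw [heq, le_div_iff₀ (by positivity)]
      nlinarith
    refine aux_psd d M ((1 - t) / t - 1 / (2 * t)) (le_trans hMLe hLc) hsym _
      (fun i j => ?_)
    simp only [Matrix.sub_apply, Matrix.neg_apply, Matrix.smul_apply, Matrix.one_apply,
      smul_eq_mul, hhessEq]
    by_cases h : i = j
    · simp only [h, if_true]
      field_simp
      ring
    · simp only [h, if_false]
      ring
end
end

section
/- Let p_data and p_G be probability densities on ℝ^d with p_data strictly positive, let λ > 0 and C₀*, c ∈ ℝ, and let D : ℝ^d → ℝ satisfy: (i) D(x) = p_data(x) / (p_data(x) + p_G(x)) for every x; (ii) −log D(x) + λ(−log p_data(x) + C₀*) = c for every x in the support of p_G, and −log D(x) + λ(−log p_data(x) + C₀*) ≥ c for every x outside the support of p_G. Then for every x, p_G(x) = p_data(x) · max{ e^{−λ C₀* + c} p_data(x)^λ − 1 , 0 }. -/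
open MeasureTheory Real

noncomputable section

/-- **Nash equilibrium of score-regularized GAN.** Let `p_data` and `p_G` be probability
densities on `ℝ^d` with `p_data` strictly positive, let `λ > 0`, `C₀*, c ∈ ℝ`, and let
`D : ℝ^d → ℝ` satisfy the discriminator optimality condition
`D(x) = p_data(x)/(p_data(x) + p_G(x))` together with the generator optimality condition
`−log D(x) + λ(−log p_data(x) + C₀*) = c` on the support of `p_G` and
`−log D(x) + λ(−log p_data(x) + C₀*) ≥ c` outside it.  Then
`p_G(x) = p_data(x) · max{e^{−λC₀* + c}·p_data(x)^λ − 1, 0}` for every `x`. -/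
theorem score_regularized_gan_equilibrium
    (d : ℕ) (hd : 1 ≤ d)
    (pdata pG : EuclideanSpace ℝ (Fin d) → ℝ)
    (hpdata_nonneg : ∀ x, 0 < pdata x)
    (hpdata_meas : Measurable pdata)
    (hpdata_int : ∫ x, pdata x = 1)
    (hpG_nonneg : ∀ x, 0 ≤ pG x)
    (hpG_meas : Measurable pG)
    (hpG_int : ∫ x, pG x = 1)
    (lam : ℝ) (hlam : 0 < lam) (C₀ c : ℝ)
    (D : EuclideanSpace ℝ (Fin d) → ℝ)
    (hD : ∀ x, D x = pdata x / (pdata x + pG x))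
    (hG_on : ∀ x, 0 < pG x →
      -Real.log (D x) + lam * (-Real.log (pdata x) + C₀) = c)
    (hG_off : ∀ x, ¬(0 < pG x) →
      -Real.log (D x) + lam * (-Real.log (pdata x) + C₀) ≥ c) :
    ∀ x, pG x = pdata x * max (Real.exp (-lam * C₀ + c) * pdata x ^ lam - 1) 0 := by
  intro x
  have ha : 0 < pdata x := hpdata_nonneg x
  have hrpow : pdata x ^ lam = Real.exp (lam * Real.log (pdata x)) := by
    rw [Real.rpow_def_of_pos ha, mul_comm]
  by_cases hg : 0 < pG x
  · have h := hG_on x hg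
    have hsum : 0 < pdata x + pG x := by linarith
    have hlog : Real.log (D x) = Real.log (pdata x) - Real.log (pdata x + pG x) := by
      rw [hD x, Real.log_div ha.ne' hsum.ne']
    have hlogsum : Real.log (pdata x + pG x) =
        (-lam * C₀ + c) + Real.log (pdata x) + lam * Real.log (pdata x) := by
      rw [hlog] at h; ring_nf at h ⊢; linarith
    have hexp : pdata x + pG x =
        Real.exp (-lam * C₀ + c) * pdata x * pdata x ^ lam := by
      calc pdata x + pG x = Real.exp (Real.log (pdata x + pG x)) :=
              (Real.exp_log hsum).symm
        _ = Real.exp (-lam * C₀ + c) * Real.exp (Real.log (pdata x)) *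
              Real.exp (lam * Real.log (pdata x)) := by
              rw [hlogsum, Real.exp_add, Real.exp_add]
        _ = Real.exp (-lam * C₀ + c) * pdata x * pdata x ^ lam := by
              rw [Real.exp_log ha, hrpow]
    have hgv : pG x = pdata x * (Real.exp (-lam * C₀ + c) * pdata x ^ lam - 1) := by
      nlinarith [hexp]
    have hpos : 0 ≤ Real.exp (-lam * C₀ + c) * pdata x ^ lam - 1 := by
      by_contra hneg
      push_neg at hneg
      nlinarith [hgv, hg, ha]
    rw [max_eq_left hpos]; exact hgv
  · have hg0 : pG x = 0 := le_antisymm (not_lt.mp hg) (hpG_nonneg x)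
    have h := hG_off x hg
    have hD1 : D x = 1 := by rw [hD x, hg0, add_zero, div_self ha.ne']
    rw [hD1, Real.log_one, neg_zero, zero_add] at h
    -- h : lam * (-log pdata + C₀) ≥ c
    have hle : -lam * C₀ + c + lam * Real.log (pdata x) ≤ 0 := by nlinarith
    have hmax : Real.exp (-lam * C₀ + c) * pdata x ^ lam - 1 ≤ 0 := by
      have : Real.exp (-lam * C₀ + c) * pdata x ^ lam =
          Real.exp (-lam * C₀ + c + lam * Real.log (pdata x)) := by
        rw [hrpow, ← Real.exp_add]
      rw [this]
      have := Real.exp_le_one_iff.mpr hle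
      linarith
    rw [hg0, max_eq_right hmax, mul_zero]
end
end
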